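/- arXiv:math/9905019 — 8 statements merged into one kernel-verified Lean document; each statement's English description precedes it below -/
import Mathlib

section
/- If X is a compact metric space and f: X → X is a locally expanding homeomorphism, then X is finite. -/
/-- A locally expanding homeomorphism of a compact metric space has finite domain. -/
theorem locally_expanding_homeo_finite {X : Type*} [MetricSpace X] [CompactSpace X]
    (f : X ≃ₜ X) (ε₀ lam : ℝ) (hε : 0 < ε₀) (hlam : 1 < lam)
    (hexp : ∀ x y : X, 0 < dist x y → dist x y < ε₀ → lam * dist x y < dist (f x) (f y)) :
    Finite X := by
  have hlam0 : (0:ℝ) < lam := lt_trans one_pos hlam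
  set g : X → X := ⇑f.symm with hg
  -- uniform continuity of g
  obtain ⟨δ, hδ0, hδ⟩ := Metric.uniformContinuous_iff.mp
    (CompactSpace.uniformContinuous_of_continuous f.symm.continuous) ε₀ hε
  -- contraction lemma
  have hc : ∀ u v : X, dist u v < δ → dist (g u) (g v) ≤ dist u v / lam := by
    intro u v huv
    rcases eq_or_ne u v with rfl | hne
    · simp [div_nonneg dist_nonneg hlam0.le]
    · have h1 : dist (g u) (g v) < ε₀ := hδ huv
      have h2 : 0 < dist (g u) (g v) := by
        rw [dist_pos]; exact fun h => hne (f.symm.injective h)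
      have h3 := hexp (g u) (g v) h2 h1
      rw [f.apply_symm_apply, f.apply_symm_apply] at h3
      rw [le_div_iff₀ hlam0, mul_comm]
      exact h3.le
  have hcδ : ∀ u v : X, dist u v < δ → dist (g u) (g v) < δ := by
    intro u v huv
    calc dist (g u) (g v) ≤ dist u v / lam := hc u v huv
      _ < δ := by rw [div_lt_iff₀ hlam0]; nlinarith
  -- iterated contraction
  have hiter : ∀ n : ℕ, ∀ u v : X, dist u v < δ →
      dist (g^[n] u) (g^[n] v) ≤ dist u v / lam ^ n := by
    intro n
    induction n with
    | zero => intro u v _; simp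
    | succ n ih =>
      intro u v huv
      have h1 : dist (g u) (g v) < δ := hcδ u v huv
      calc dist (g^[n+1] u) (g^[n+1] v)
          = dist (g^[n] (g u)) (g^[n] (g v)) := by
            rw [Function.iterate_succ_apply, Function.iterate_succ_apply]
        _ ≤ dist (g u) (g v) / lam ^ n := ih (g u) (g v) h1
        _ ≤ (dist u v / lam) / lam ^ n := by
            apply div_le_div_of_nonneg_right (hc u v huv) (pow_pos hlam0 n).le
        _ = dist u v / lam ^ (n+1) := by rw [div_div, ← pow_succ']
  -- finite cover by balls of radius δ/2
  obtain ⟨t, -, tfin, hcov⟩ := finite_cover_balls_of_compact (isCompact_univ (X := X))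
    (half_pos hδ0)
  classical
  set T : Finset X := tfin.toFinset with hT
  by_contra hinf
  rw [not_finite_iff_infinite] at hinf
  obtain ⟨s, hs⟩ : ∃ s : Finset X, s.card = T.card + 2 :=
    Infinite.exists_subset_card_eq X (T.card + 2)
  -- minimal pairwise distance
  have hsne : s.offDiag.Nonempty := by
    obtain ⟨a, ha, b, hb, hab⟩ := Finset.one_lt_card.mp (by rw [hs]; exact Nat.succ_lt_succ (Nat.succ_pos _) : 1 < s.card)
    exact ⟨(a, b), Finset.mem_offDiag.mpr ⟨ha, hb, hab⟩⟩
  obtain ⟨⟨p₀, q₀⟩, hpq₀, hmin⟩ := s.offDiag.exists_min_image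
    (fun pq => dist pq.1 pq.2) hsne
  set m : ℝ := dist p₀ q₀ with hm
  have hm0 : 0 < m := by
    rw [Finset.mem_offDiag] at hpq₀
    exact dist_pos.mpr hpq₀.2.2
  -- choose n with δ / lam ^ n < m
  obtain ⟨n, hn⟩ := pow_unbounded_of_one_lt (δ / m) hlam
  have hδn : δ / lam ^ n < m := by
    rw [div_lt_iff₀ (pow_pos hlam0 n)]
    calc δ = (δ / m) * m := by field_simp
      _ < lam ^ n * m := by
        apply mul_lt_mul_of_pos_right hn hm0
      _ = m * lam ^ n := mul_comm _ _
  -- map each point of s to a center in T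
  have hsel : ∀ p : X, ∃ c ∈ T, (f : X → X)^[n] p ∈ Metric.ball c (δ/2) := by
    intro p
    have := hcov (Set.mem_univ ((f : X → X)^[n] p))
    simp only [Set.mem_iUnion, exists_prop] at this
    obtain ⟨c, hc1, hc2⟩ := this
    exact ⟨c, by simpa [hT] using hc1, hc2⟩
  choose φ hφT hφball using hsel
  obtain ⟨p, hp, q, hq, hpqne, hφeq⟩ := Finset.exists_ne_map_eq_of_card_lt_of_maps_to
    (by rw [hs]; exact Nat.lt_add_of_pos_right (by norm_num)) (fun a _ => hφT a)
  -- derive contradiction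
  have hfd : dist ((f : X → X)^[n] p) ((f : X → X)^[n] q) < δ := by
    calc dist ((f : X → X)^[n] p) ((f : X → X)^[n] q)
        ≤ dist ((f : X → X)^[n] p) (φ p) + dist (φ q) ((f : X → X)^[n] q) := by
          rw [hφeq]; exact dist_triangle _ _ _
      _ < δ/2 + δ/2 := by
          apply add_lt_add (hφball p)
          rw [dist_comm]; exact hφball q
      _ = δ := by ring
  have hli : Function.LeftInverse g (f : X → X) := f.symm_apply_apply
  have hgf : ∀ x : X, g^[n] ((f : X → X)^[n] x) = x := fun x => hli.iterate n x
  have hd : dist p q ≤ δ / lam ^ n := by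
    have := hiter n ((f : X → X)^[n] p) ((f : X → X)^[n] q) hfd
    rw [hgf, hgf] at this
    calc dist p q ≤ dist ((f : X → X)^[n] p) ((f : X → X)^[n] q) / lam ^ n := this
      _ ≤ δ / lam ^ n := by
          apply div_le_div_of_nonneg_right hfd.le (pow_pos hlam0 n).le
  have hmle : m ≤ dist p q := hmin (p, q) (Finset.mem_offDiag.mpr ⟨hp, hq, hpqne⟩)
  linarith
end

section
/- Let T be a tent map with slope a > 1 and let B ⊆ [0,1] be a compact set with T(B) = B such that T restricted to B is a homeomorphism. If the turning point c is not in B, then B is finite. -/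
/-- The tent map with slope `a`. -/
noncomputable def tent (a x : ℝ) : ℝ := min (a * x) (a * (1 - x))

/-!
Since `T` is injective on `B` and `c ∉ B`, the images of the compact halves `B ∩ (-∞, c]` and
`B ∩ [c, ∞)` are disjoint compact sets, so they lie at distance greater than some `δ > 0`.
Hence two points of `B` whose images are `δ`-close lie on the same side of `c`, where `T`
multiplies distances by `a`; iterating, two points of `B` whose `n`-th images are `δ`-close are
`aⁿ` times closer. So for any finite `S ⊆ B` and `n` large, `Tⁿ` maps `S` injectively onto a
`δ`-separated subset of `B`, whose size is bounded by the (finite) `δ`-packing number of the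
compact set `B`.
-/

open Set Filter Metric
open scoped NNReal

section LocallyExpanding

variable {X : Type*}

theorem IsCompact.packingNumber_ne_top [PseudoEMetricSpace X] {B : Set X} (hB : IsCompact B)
    {ε : ℝ≥0} (hε : ε ≠ 0) : packingNumber ε B ≠ ⊤ := by
  obtain ⟨N, -, hN, hcover⟩ :=
    exists_finite_isCover_of_isCompact (ε := ε / 2) (by simpa using hε) hB
  refine ne_top_of_le_ne_top hN.encard_lt_top.ne ?_
  calc packingNumber ε B = packingNumber (2 * (ε / 2)) B := by
        rw [mul_div_cancel₀ _ two_ne_zero]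
    _ ≤ externalCoveringNumber (ε / 2) B := packingNumber_two_mul_le_externalCoveringNumber _ _
    _ ≤ N.encard := hcover.externalCoveringNumber_le_encard

theorem dist_iterate_eq_pow_mul [PseudoMetricSpace X] {f : X → X} {B : Set X}
    (hf : MapsTo f B B) {a δ : ℝ} (ha : 1 ≤ a)
    (hexp : ∀ x ∈ B, ∀ y ∈ B, dist (f x) (f y) ≤ δ → dist (f x) (f y) = a * dist x y)
    {x y : X} (hx : x ∈ B) (hy : y ∈ B) :
    ∀ n : ℕ, dist (f^[n] x) (f^[n] y) ≤ δ → dist (f^[n] x) (f^[n] y) = a ^ n * dist x y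
  | 0, _ => by simp
  | n + 1, h => by
    rw [Function.iterate_succ_apply', Function.iterate_succ_apply'] at h ⊢
    have hstep := hexp _ (hf.iterate n hx) _ (hf.iterate n hy) h
    have hle : dist (f^[n] x) (f^[n] y) ≤ δ := by
      nlinarith [dist_nonneg (x := f^[n] x) (y := f^[n] y)]
    rw [hstep, dist_iterate_eq_pow_mul hf ha hexp hx hy n hle, pow_succ]
    ring

theorem IsCompact.finite_of_mapsTo_of_dist_eq_mul [MetricSpace X] {f : X → X} {B : Set X}
    (hB : IsCompact B) (hf : MapsTo f B B) {a : ℝ} (ha : 1 < a) {δ : ℝ≥0} (hδ : δ ≠ 0)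
    (hexp : ∀ x ∈ B, ∀ y ∈ B, dist (f x) (f y) ≤ δ → dist (f x) (f y) = a * dist x y) :
    B.Finite := by
  by_contra hinf
  set P := packingNumber δ B
  have hP : P ≠ ⊤ := hB.packingNumber_ne_top hδ
  obtain ⟨S, hSB, hS⟩ := exists_subset_encard_eq
    ((le_top : P + 1 ≤ ⊤).trans_eq (encard_eq_top_iff.2 hinf).symm)
  have hSfin : S.Finite := encard_ne_top_iff.1 (hS ▸ by simpa using hP)
  have hlarge :
      ∀ᶠ n in atTop, ∀ x ∈ S, ∀ y ∈ S, x ≠ y → (δ : ℝ) < a ^ n * dist x y := by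
    simp only [eventually_all_finite hSfin]
    intro x _ y _
    rcases eq_or_ne x y with rfl | hxy
    · exact Eventually.of_forall fun _ h => absurd rfl h
    · filter_upwards [((tendsto_pow_atTop_atTop_of_one_lt ha).atTop_mul_const
        (dist_pos.2 hxy)).eventually_gt_atTop (δ : ℝ)] with n hn _ using hn
  obtain ⟨n, hn⟩ := hlarge.exists
  have hsep : ∀ x ∈ S, ∀ y ∈ S, x ≠ y → (δ : ℝ) < dist (f^[n] x) (f^[n] y) := by
    intro x hx y hy hxy
    by_contra! hle
    have := dist_iterate_eq_pow_mul hf ha.le hexp (hSB hx) (hSB hy) n hle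
    linarith [hn x hx y hy hxy]
  have hinj : InjOn f^[n] S := fun x hx y hy h => by
    by_contra hxy
    have := hsep x hx y hy hxy
    rw [h, dist_self] at this
    exact absurd this (not_lt.2 δ.coe_nonneg)
  have himage_sep : IsSeparated δ (f^[n] '' S) := by
    rintro _ ⟨x, hx, rfl⟩ _ ⟨y, hy, rfl⟩ hne
    rw [edist_dist, ← ENNReal.ofReal_coe_nnreal]
    exact (ENNReal.ofReal_lt_ofReal_iff_of_nonneg δ.coe_nonneg).2
      (hsep x hx y hy fun h => hne (h ▸ rfl))
  have hle := himage_sep.encard_le_packingNumber (A := B)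
    (image_subset_iff.2 fun x hx => hf.iterate n (hSB hx))
  rw [hinj.encard_image, hS] at hle
  exact ((ENat.add_one_le_iff hP).1 hle).false

end LocallyExpanding

theorem exists_pos_forall_le_iff_le_of_dist_le {α Y : Type*} [TopologicalSpace α]
    [LinearOrder α] [OrderClosedTopology α] [MetricSpace Y] {f : α → Y} {B : Set α}
    (hB : IsCompact B) (hf : ContinuousOn f B) (hinj : InjOn f B) {c : α} (hc : c ∉ B) :
    ∃ δ : ℝ≥0, δ ≠ 0 ∧ ∀ x ∈ B, ∀ y ∈ B, dist (f x) (f y) ≤ δ → (x ≤ c ↔ y ≤ c) := by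
  have hleft : IsCompact (f '' (B ∩ Iic c)) :=
    (hB.inter_right isClosed_Iic).image_of_continuousOn (hf.mono inter_subset_left)
  have hright : IsCompact (f '' (B ∩ Ici c)) :=
    (hB.inter_right isClosed_Ici).image_of_continuousOn (hf.mono inter_subset_left)
  have hdisj : Disjoint (f '' (B ∩ Iic c)) (f '' (B ∩ Ici c)) := by
    refine disjoint_left.2 ?_
    rintro _ ⟨x, ⟨hxB, hxc⟩, rfl⟩ ⟨y, ⟨hyB, hyc⟩, hxy⟩
    obtain rfl := hinj hyB hxB hxy
    exact hc (le_antisymm hxc hyc ▸ hyB)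
  obtain ⟨δ, hδ, hsep⟩ := exists_pos_forall_lt_edist hleft hright.isClosed hdisj
  have hfar : ∀ x ∈ B, ∀ y ∈ B, x ≤ c → c ≤ y → (δ : ℝ) < dist (f x) (f y) := by
    intro x hx y hy hxc hyc
    simpa [edist_dist, ← ENNReal.ofReal_coe_nnreal,
      ENNReal.ofReal_lt_ofReal_iff_of_nonneg] using
      hsep _ (mem_image_of_mem f ⟨hx, hxc⟩) _ (mem_image_of_mem f ⟨hy, hyc⟩)
  refine ⟨δ, hδ.ne', fun x hx y hy hxy => ⟨fun hxc => ?_, fun hyc => ?_⟩⟩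
  · exact not_lt.1 fun hcy => (hfar x hx y hy hxc hcy.le).not_ge hxy
  · exact not_lt.1 fun hcx => (hfar y hy x hx hyc hcx.le).not_ge (dist_comm (f x) (f y) ▸ hxy)

theorem tent_of_le_half {a x : ℝ} (ha : 0 ≤ a) (hx : x ≤ 1 / 2) : tent a x = a * x :=
  min_eq_left (mul_le_mul_of_nonneg_left (by linarith) ha)

theorem tent_of_half_le {a x : ℝ} (ha : 0 ≤ a) (hx : 1 / 2 ≤ x) : tent a x = a * (1 - x) :=
  min_eq_right (mul_le_mul_of_nonneg_left (by linarith) ha)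

theorem continuous_tent (a : ℝ) : Continuous (tent a) := by
  unfold tent
  fun_prop

theorem dist_tent_tent {a x y : ℝ} (ha : 0 ≤ a) (h : x ≤ 1 / 2 ↔ y ≤ 1 / 2) :
    dist (tent a x) (tent a y) = a * dist x y := by
  simp only [Real.dist_eq]
  by_cases hx : x ≤ 1 / 2
  · rw [tent_of_le_half ha hx, tent_of_le_half ha (h.1 hx), ← mul_sub, abs_mul, abs_of_nonneg ha]
  · rw [tent_of_half_le ha (le_of_not_ge hx), tent_of_half_le ha (le_of_not_ge (mt h.2 hx)),
      show a * (1 - x) - a * (1 - y) = a * (y - x) by ring, abs_mul, abs_of_nonneg ha,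
      abs_sub_comm]

theorem finite_of_homeo_restriction_not_mem_turning_general (a : ℝ) (ha : 1 < a)
    (B : Set ℝ) (hcomp : IsCompact B)
    (hinv : tent a '' B = B)
    (hhom : ∃ h : B ≃ₜ B, ∀ x : B, (h x : ℝ) = tent a x)
    (hc : (1 / 2 : ℝ) ∉ B) : B.Finite := by
  obtain ⟨h, hh⟩ := hhom
  have hinj : InjOn (tent a) B := fun x hx y hy hxy =>
    congrArg Subtype.val <| h.injective
      (Subtype.ext (by simpa only [hh] using hxy) : h ⟨x, hx⟩ = h ⟨y, hy⟩)
  have hmaps : MapsTo (tent a) B B := fun x hx => hinv ▸ mem_image_of_mem (tent a) hx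
  obtain ⟨δ, hδ, hside⟩ :=
    exists_pos_forall_le_iff_le_of_dist_le hcomp (continuous_tent a).continuousOn hinj hc
  exact hcomp.finite_of_mapsTo_of_dist_eq_mul hmaps ha hδ fun x hx y hy hxy =>
    dist_tent_tent (by linarith) (hside x hx y hy hxy)

/-- If `B ⊆ [0,1]` is compact, invariant (`T(B) = B`), the restriction of the tent map
`T = T_a` (slope `a > 1`) to `B` is a homeomorphism, and the turning point `c = 1/2`
does not belong to `B`, then `B` is finite. -/
theorem finite_of_homeo_restriction_not_mem_turning (a : ℝ) (ha : 1 < a)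
    (B : Set ℝ) (hB : B ⊆ Set.Icc 0 1) (hcomp : IsCompact B)
    (hinv : tent a '' B = B)
    (hhom : ∃ h : B ≃ₜ B, ∀ x : B, (h x : ℝ) = tent a x)
    (hc : (1 / 2 : ℝ) ∉ B) : B.Finite :=
  finite_of_homeo_restriction_not_mem_turning_general a ha B hcomp hinv hhom hc
end

section
/- For a unimodal map, the difference of two consecutive cutting times is again a cutting time; that is, there is a function Q: ℕ → ℕ ∪ {0} with Q(k) < k such that S_k = S_{k−1} + S_{Q(k)} for all k ≥ 1. -/
/-- `T` is a unimodal map of `[0,1]` with turning point `c`. -/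
structure Unimodal (T : ℝ → ℝ) (c : ℝ) : Prop where
  cont : ContinuousOn T (Set.Icc 0 1)
  maps : Set.MapsTo T (Set.Icc 0 1) (Set.Icc 0 1)
  hc : c ∈ Set.Ioo (0 : ℝ) 1
  mono : StrictMonoOn T (Set.Icc 0 c)
  anti : StrictAntiOn T (Set.Icc c 1)

/-- The left endpoint of the domain of the left central branch of `T^n`:
the infimum of the `x ∈ [0,c]` such that `T^n` is injective (monotone) on `[x,c]`. -/
noncomputable def leftEnd (T : ℝ → ℝ) (c : ℝ) (n : ℕ) : ℝ :=
  sInf {x : ℝ | 0 ≤ x ∧ Set.InjOn (T^[n]) (Set.Icc x c)}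

/-- `D_n`, the common image of the two central branches of `T^n`. -/
noncomputable def level (T : ℝ → ℝ) (c : ℝ) (n : ℕ) : Set ℝ :=
  T^[n] '' Set.Icc (leftEnd T c n) c

/-- `n` is a cutting time iff `c ∈ D_n`. -/
def CuttingTime (T : ℝ → ℝ) (c : ℝ) (n : ℕ) : Prop := c ∈ level T c n

/-!
Write `z_n = leftEnd T c n`, so that `D_n = T^n [z_n, c]` with `T^n` injective on `[z_n, c]`.
While `c ∉ D_n`, the interval `D_n` lies on one side of `c`, so `T` is injective on it and
`z_{n+1} = z_n`. Hence, for consecutive cutting times `m < n`, we get `z_n = z_{m+1}`,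
`D_n = T^{n-m-1} D_{m+1}`, and `T^{n-m-1}` is injective on the interval `D_{m+1}`, which contains
`T c` because `m` is a cutting time. If `D_{m+1}` reached below `T 0` it would contain
`D_1 ∋ c`, making `m + 1` a cutting time; so the point `k ∈ D_{m+1}` with `T^{n-m-1} k = c`
lies in `[T 0, T c] = T [0, c]`. Pulling `[k, T c]` back through the increasing branch gives an
interval `[x, c]` on which `T^{n-m}` is injective and takes the value `c`, so `n - m` is a cutting
time.
-/

open Set Filter Topology

section InjOnClosure

variable {δ : Type*} [LinearOrder δ] [TopologicalSpace δ] [OrderClosedTopology δ]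
  {f : ℝ → δ} {a b : ℝ}

lemma apply_le_of_injOn_Ioc_of_lt {w : ℝ} (haw : a < w) (hwb : w < b)
    (hf : ContinuousOn f (Icc a b)) (hinj : InjOn f (Ioc a b)) (hlt : f w < f b) :
    f a ≤ f w := by
  have hle : ∀ x ∈ Ioo a w, f x ≤ f w := by
    intro x hx
    have hxb : x ≤ b := (hx.2.trans hwb).le
    rcases (hf.mono (Icc_subset_Icc_left hx.1.le)).strictMonoOn_of_injOn_Icc' hxb
      (hinj.mono ((Icc_subset_Ioc_iff hxb).2 ⟨hx.1, le_rfl⟩)) with h | h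
    · exact (h (left_mem_Icc.2 hxb) ⟨hx.2.le, hwb.le⟩ hx.2).le
    · exact absurd hlt (h ⟨hx.2.le, hwb.le⟩ (right_mem_Icc.2 hxb) hwb).not_gt
  have htends : Tendsto f (𝓝[>] a) (𝓝 (f a)) :=
    ((hf a (left_mem_Icc.2 (haw.trans hwb).le)).mono_of_mem_nhdsWithin
      (Icc_mem_nhdsGT (haw.trans hwb))).tendsto
  exact le_of_tendsto htends (eventually_of_mem (Ioo_mem_nhdsGT haw) hle)

theorem ContinuousOn.injOn_Icc_of_injOn_Ioc (hf : ContinuousOn f (Icc a b))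
    (hinj : InjOn f (Ioc a b)) : InjOn f (Icc a b) := by
  rcases lt_or_ge a b with hab | hba
  · rw [← Ioc_insert_left hab.le, injOn_insert (by simp)]
    refine ⟨hinj, ?_⟩
    rintro ⟨y, hy, hya⟩
    have hy' : y ∈ Ioc a y := ⟨hy.1, le_rfl⟩
    obtain ⟨w, haw, hwy⟩ := exists_between hy.1
    have hfy := hf.mono (Icc_subset_Icc_right hy.2)
    have hinjy := hinj.mono (Ioc_subset_Ioc_right hy.2)
    have hwy' : f w ≠ f y := fun h => hwy.ne (hinjy ⟨haw, hwy.le⟩ hy' h)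
    rcases hwy'.lt_or_gt with h | h
    · exact (apply_le_of_injOn_Ioc_of_lt haw hwy hfy hinjy h).not_gt (hya ▸ h)
    · exact (apply_le_of_injOn_Ioc_of_lt (δ := δᵒᵈ) haw hwy hfy hinjy h).not_gt (hya ▸ h)
  · exact (subsingleton_Icc_of_ge hba).injOn f

end InjOnClosure

lemma Set.OrdConnected.subset_Iio_or_subset_Ioi {s : Set ℝ} {c : ℝ} (hs : s.OrdConnected)
    (hc : c ∉ s) : s ⊆ Iio c ∨ s ⊆ Ioi c := by
  rw [or_iff_not_imp_left, not_subset]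
  rintro ⟨x, hxs, hxc⟩ y hys
  by_contra hyc
  exact hc (hs.out hys hxs ⟨not_lt.1 hyc, not_lt.1 hxc⟩)

lemma leftEnd_nonneg (T : ℝ → ℝ) (c : ℝ) (n : ℕ) : 0 ≤ leftEnd T c n :=
  Real.sInf_nonneg fun _ hx => hx.1

lemma leftEnd_le_of_injOn {T : ℝ → ℝ} {c u : ℝ} {n : ℕ} (hu : 0 ≤ u)
    (h : InjOn T^[n] (Icc u c)) : leftEnd T c n ≤ u :=
  csInf_le ⟨0, fun _ hx => hx.1⟩ ⟨hu, h⟩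

namespace Unimodal

variable {T : ℝ → ℝ} {c : ℝ} (hT : Unimodal T c)
include hT

lemma mapsTo_iterate (n : ℕ) : MapsTo T^[n] (Icc 0 1) (Icc 0 1) := hT.maps.iterate n

lemma continuousOn_iterate (n : ℕ) : ContinuousOn T^[n] (Icc 0 1) := by
  induction n with
  | zero => exact continuousOn_id
  | succ n ih => simpa only [Function.iterate_succ'] using hT.cont.comp ih (hT.mapsTo_iterate n)

lemma apply_le_apply_turningPoint {x : ℝ} (hx : x ∈ Icc 0 1) : T x ≤ T c := by
  rcases le_total x c with hxc | hcx
  · exact hT.mono.monotoneOn ⟨hx.1, hxc⟩ ⟨hT.hc.1.le, le_rfl⟩ hxc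
  · exact hT.anti.antitoneOn ⟨le_rfl, hT.hc.2.le⟩ ⟨hcx, hx.2⟩ hcx

lemma injOn_of_subset_Iic_or_subset_Ici {s : Set ℝ} (hs : s ⊆ Icc 0 1)
    (h : s ⊆ Iic c ∨ s ⊆ Ici c) : InjOn T s := by
  rcases h with h | h
  · exact hT.mono.injOn.mono fun x hx => show x ∈ Icc 0 c from ⟨(hs hx).1, h hx⟩
  · exact hT.anti.injOn.mono fun x hx => show x ∈ Icc c 1 from ⟨h hx, (hs hx).2⟩

lemma Icc_leftEnd_subset (n : ℕ) : Icc (leftEnd T c n) c ⊆ Icc 0 1 :=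
  Icc_subset_Icc (leftEnd_nonneg T c n) hT.hc.2.le

lemma injOn_leftEnd (n : ℕ) : InjOn T^[n] (Icc (leftEnd T c n) c) := by
  refine ((hT.continuousOn_iterate n).mono (hT.Icc_leftEnd_subset n)).injOn_Icc_of_injOn_Ioc ?_
  intro x hx y hy
  obtain ⟨u, ⟨-, hu⟩, hux⟩ :=
    exists_lt_of_csInf_lt (s := {u | 0 ≤ u ∧ InjOn T^[n] (Icc u c)})
      ⟨c, hT.hc.1.le, by simp⟩ (lt_min hx.1 hy.1)
  exact hu ⟨(hux.trans_le (min_le_left x y)).le, hx.2⟩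
    ⟨(hux.trans_le (min_le_right x y)).le, hy.2⟩

lemma leftEnd_le_leftEnd_succ (n : ℕ) : leftEnd T c n ≤ leftEnd T c (n + 1) :=
  leftEnd_le_of_injOn (leftEnd_nonneg T c _) <| by
    have h := hT.injOn_leftEnd (n + 1)
    rw [Function.iterate_succ'] at h
    exact h.of_comp

lemma level_subset (n : ℕ) : level T c n ⊆ Icc 0 1 :=
  ((hT.mapsTo_iterate n).mono_left (hT.Icc_leftEnd_subset n)).image_subset

lemma ordConnected_level (n : ℕ) : (level T c n).OrdConnected :=
  isPreconnected_iff_ordConnected.1 <|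
    isPreconnected_Icc.image _ ((hT.continuousOn_iterate n).mono (hT.Icc_leftEnd_subset n))

lemma level_one_subset : level T c 1 ⊆ Icc (T 0) (T c) := by
  rw [level, Function.iterate_one]
  exact (image_mono (Icc_subset_Icc_left (leftEnd_nonneg T c 1))).trans
    hT.mono.monotoneOn.image_Icc_subset

lemma leftEnd_succ_of_not_cuttingTime {n : ℕ} (h : ¬ CuttingTime T c n) :
    leftEnd T c (n + 1) = leftEnd T c n := by
  have hinj : InjOn T (level T c n) :=
    hT.injOn_of_subset_Iic_or_subset_Ici (hT.level_subset n)
      (((hT.ordConnected_level n).subset_Iio_or_subset_Ioi h).imp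
        (·.trans Iio_subset_Iic_self) (·.trans Ioi_subset_Ici_self))
  refine le_antisymm (leftEnd_le_of_injOn (leftEnd_nonneg T c n) ?_)
    (hT.leftEnd_le_leftEnd_succ n)
  rw [Function.iterate_succ']
  exact hinj.comp (hT.injOn_leftEnd n) (mapsTo_image _ _)

lemma leftEnd_add_of_not_cuttingTime {n i : ℕ}
    (h : ∀ j, n ≤ j → j < n + i → ¬ CuttingTime T c j) :
    leftEnd T c (n + i) = leftEnd T c n := by
  induction i with
  | zero => rfl
  | succ i ih =>
    rw [← add_assoc, hT.leftEnd_succ_of_not_cuttingTime (h _ le_self_add (by omega))]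
    exact ih fun j hnj hj => h j hnj (by omega)

lemma mem_image_Icc_leftEnd_succ {m : ℕ} (h : CuttingTime T c m) :
    c ∈ T^[m] '' Icc (leftEnd T c (m + 1)) c := by
  obtain ⟨p, hp, hpc⟩ := h
  have hp0 : 0 ≤ p := (leftEnd_nonneg T c m).trans hp.1
  have hinjp : InjOn T^[m] (Icc p c) := (hT.injOn_leftEnd m).mono (Icc_subset_Icc_left hp.1)
  have hside : T^[m] '' Icc p c ⊆ Iic c ∨ T^[m] '' Icc p c ⊆ Ici c := by
    rcases ((hT.continuousOn_iterate m).mono (Icc_subset_Icc hp0 hT.hc.2.le)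
      ).strictMonoOn_of_injOn_Icc' hp.2 hinjp with hmono | hanti
    · exact Or.inr (hmono.monotoneOn.image_Icc_subset.trans (hpc ▸ Icc_subset_Ici_self))
    · exact Or.inl (hanti.antitoneOn.image_Icc_subset.trans (hpc ▸ Icc_subset_Iic_self))
  have hinj : InjOn T^[m + 1] (Icc p c) := by
    rw [Function.iterate_succ']
    refine (hT.injOn_of_subset_Iic_or_subset_Ici ?_ hside).comp hinjp (mapsTo_image _ _)
    exact ((hT.mapsTo_iterate m).mono_left (Icc_subset_Icc hp0 hT.hc.2.le)).image_subset
  exact ⟨p, ⟨leftEnd_le_of_injOn hp0 hinj, hp.2⟩, hpc⟩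

lemma cuttingTime_succ_of_injOn {t : ℕ} {k : ℝ} (hk : k ∈ Icc (T 0) (T c))
    (hinj : InjOn T^[t] (Icc k (T c))) (hkc : T^[t] k = c) : CuttingTime T c (t + 1) := by
  obtain ⟨x, hx, hTx⟩ :=
    intermediate_value_Icc hT.hc.1.le (hT.cont.mono (Icc_subset_Icc_right hT.hc.2.le)) hk
  have hmonoOn : MonotoneOn T (Icc x c) := hT.mono.monotoneOn.mono (Icc_subset_Icc_left hx.1)
  have hmaps : MapsTo T (Icc x c) (Icc k (T c)) :=
    mapsTo_iff_image_subset.2 (hTx ▸ hmonoOn.image_Icc_subset)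
  have hinjx : InjOn T^[t + 1] (Icc x c) := by
    rw [Function.iterate_succ]
    exact hinj.comp (hT.mono.injOn.mono (Icc_subset_Icc_left hx.1)) hmaps
  refine ⟨x, ⟨leftEnd_le_of_injOn hx.1 hinjx, hx.2⟩, ?_⟩
  rw [Function.iterate_succ_apply, hTx, hkc]

theorem cuttingTime_sub (h1 : CuttingTime T c 1) {m n : ℕ} (hm : CuttingTime T c m)
    (hn : CuttingTime T c n) (hmn : m < n)
    (hgap : ∀ j, m < j → j < n → ¬ CuttingTime T c j) : CuttingTime T c (n - m) := by
  obtain ⟨t, rfl⟩ : ∃ t, n = m + 1 + t := ⟨n - m - 1, by omega⟩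
  rw [show m + 1 + t - m = t + 1 by omega]
  rcases Nat.eq_zero_or_pos t with rfl | ht
  · exact h1
  set K := level T c (m + 1)
  have hz : leftEnd T c (m + 1 + t) = leftEnd T c (m + 1) :=
    hT.leftEnd_add_of_not_cuttingTime fun j hj hj' => hgap j (by omega) hj'
  have hiter : T^[m + 1 + t] = T^[t] ∘ T^[m + 1] := by rw [add_comm, Function.iterate_add]
  have hinjK : InjOn T^[t] K := by
    have h := hT.injOn_leftEnd (m + 1 + t)
    rw [hz, hiter] at h
    exact h.image_of_comp
  obtain ⟨k, hkK, hkc⟩ : c ∈ T^[t] '' K := by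
    have h : c ∈ level T c (m + 1 + t) := hn
    rwa [level, hz, hiter, image_comp] at h
  have hTcK : T c ∈ K := by
    obtain ⟨p, hp, hpc⟩ := hT.mem_image_Icc_leftEnd_succ hm
    exact ⟨p, hp, by rw [Function.iterate_succ_apply', hpc]⟩
  have hkTc : k ≤ T c := by
    obtain ⟨q, hq, rfl⟩ := hkK
    rw [Function.iterate_succ_apply']
    exact hT.apply_le_apply_turningPoint (hT.mapsTo_iterate m (hT.Icc_leftEnd_subset _ hq))
  have hIccK : Icc k (T c) ⊆ K := (hT.ordConnected_level _).out hkK hTcK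
  have hk0 : T 0 ≤ k := by
    by_contra! hk
    have hc1 := hT.level_one_subset h1
    exact hgap (m + 1) (by omega) (by omega) (hIccK ⟨hk.le.trans hc1.1, hc1.2⟩)
  exact hT.cuttingTime_succ_of_injOn ⟨hk0, hkTc⟩ (hinjK.mono hIccK) hkc

end Unimodal

theorem kneading_map_exists_general (T : ℝ → ℝ) (c : ℝ) (hT : Unimodal T c)
    (S : ℕ → ℕ) (hmono : StrictMono S) (hS0 : S 0 = 1)
    (hcut : ∀ n, 1 ≤ n → (CuttingTime T c n ↔ ∃ k, S k = n)) :
    ∃ Q : ℕ → ℕ, ∀ k, 1 ≤ k → Q k < k ∧ S k = S (k - 1) + S (Q k) := by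
  have hpos : ∀ k, 1 ≤ S k := fun k => hS0 ▸ hmono.monotone (Nat.zero_le k)
  have hS : ∀ k, CuttingTime T c (S k) := fun k => (hcut _ (hpos k)).2 ⟨k, rfl⟩
  have key : ∀ k, 1 ≤ k → ∃ j, j < k ∧ S k = S (k - 1) + S j := by
    intro k hk
    have hlt : S (k - 1) < S k := hmono (by omega)
    have hprev : 1 ≤ S (k - 1) := hpos (k - 1)
    have hgap : ∀ j, S (k - 1) < j → j < S k → ¬ CuttingTime T c j := by
      rintro j hj1 hj2 hj
      obtain ⟨i, rfl⟩ := (hcut j (by omega)).1 hj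
      have := hmono.lt_iff_lt.1 hj1
      have := hmono.lt_iff_lt.1 hj2
      omega
    obtain ⟨j, hj⟩ := (hcut _ (by omega)).1
      (hT.cuttingTime_sub (hS0 ▸ hS 0) (hS _) (hS k) hlt hgap)
    exact ⟨j, hmono.lt_iff_lt.1 (by omega), by omega⟩
  choose! Q hQ using key
  exact ⟨Q, hQ⟩

/-- The difference of two consecutive cutting times is a cutting time: if `S` enumerates
the cutting times of a unimodal map (with `S_0 = 1`, `S_1 = 2`), then there is a kneading
map `Q` with `Q(k) < k` and `S_k = S_{k-1} + S_{Q(k)}` for all `k ≥ 1`. -/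
theorem kneading_map_exists (T : ℝ → ℝ) (c : ℝ) (hT : Unimodal T c)
    (S : ℕ → ℕ) (hmono : StrictMono S) (hS0 : S 0 = 1) (hS1 : S 1 = 2)
    (hcut : ∀ n, 1 ≤ n → (CuttingTime T c n ↔ ∃ k, S k = n)) :
    ∃ Q : ℕ → ℕ, ∀ k, 1 ≤ k → Q k < k ∧ S k = S (k - 1) + S (Q k) :=
  kneading_map_exists_general T c hT S hmono hS0 hcut
end

section
/- Every non-negative integer n can be written uniquely in the canonical greedy way as n = Σ_i e_i S_i with e_i ∈ {0,1}, where e_i = 1 iff i = max{ j : S_j ≤ n − Σ_{k>i} e_k S_k }; moreover this greedy representation satisfies: e_i = 1 implies e_j = 0 for all Q(i+1) ≤ j < i. -/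
/-- The tail sum `Σ_{k > i} e_k S_k` of a digit sequence. -/
noncomputable def tailSum (S e : ℕ → ℕ) (i : ℕ) : ℕ := ∑' k : ℕ, if i < k then e k * S k else 0

/-- `e` is the canonical greedy representation of `n` with respect to the base `(S_i)`:
the digits are `0` or `1`, finitely many are nonzero, `n = Σ_i e_i S_i`, and
`e_i = 1` iff `i = max { j : S_j ≤ n − Σ_{k > i} e_k S_k }`. -/
noncomputable def IsGreedyRep (S : ℕ → ℕ) (n : ℕ) (e : ℕ → ℕ) : Prop :=
  (∀ i, e i ≤ 1) ∧ (∃ N, ∀ i, N ≤ i → e i = 0) ∧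
  (n = ∑' i : ℕ, e i * S i) ∧
  (∀ i, (e i = 1 ↔ IsGreatest {j | S j ≤ n - tailSum S e i} i))

/-!
The greedy algorithm removes the largest `S i ≤ n` and recurses on a remainder below
`S (i + 1) - S i = S (Q (i + 1))`, so all later digits lie below `Q (i + 1)`: the support of its
output is admissible. Conversely, the recursion `S (a + 1) = S a + S (Q (a + 1))` shows, by
induction on the largest element, that an admissible set whose elements are `< M` has `S`-sum
`< S M`. Applied to the part of an admissible set up to `i`, this says that its indicator satisfies
the greedy condition at `i`. Uniqueness holds for any base, since the greedy condition determines
each digit from the higher ones.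
-/

open Finset

theorem tsum_ite_mem_eq_sum {α M : Type*} [AddCommMonoid M] [TopologicalSpace M] [DecidableEq α]
    (F : Finset α) (g : α → M) : ∑' a, (if a ∈ F then g a else 0) = ∑ a ∈ F, g a :=
  (tsum_eq_sum fun _ ha => if_neg ha).trans (sum_congr rfl fun _ ha => if_pos ha)

section GreedyRep

variable {S : ℕ → ℕ} {n : ℕ} {e f : ℕ → ℕ}

theorem tailSum_ite_mem (F : Finset ℕ) (i : ℕ) :
    tailSum S (fun k => if k ∈ F then 1 else 0) i = ∑ k ∈ F with i < k, S k := by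
  rw [tailSum, ← tsum_ite_mem_eq_sum]
  congr 1
  ext k
  by_cases hk : k ∈ F <;> by_cases hik : i < k <;> simp [hk, hik]

theorem tailSum_congr {k : ℕ} (h : ∀ l, k < l → e l = f l) : tailSum S e k = tailSum S f k := by
  refine tsum_congr fun l => ?_
  split_ifs with hl
  · rw [h l hl]
  · rfl

theorem IsGreedyRep.eq_of_tailSum_eq (he : IsGreedyRep S n e) (hf : IsGreedyRep S n f) {k : ℕ}
    (h : tailSum S e k = tailSum S f k) : e k = f k := by
  have hiff : e k = 1 ↔ f k = 1 := (he.2.2.2 k).trans (h ▸ hf.2.2.2 k).symm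
  have := he.1 k
  have := hf.1 k
  omega

theorem IsGreedyRep.unique (he : IsGreedyRep S n e) (hf : IsGreedyRep S n f) : e = f := by
  obtain ⟨N, hN⟩ := he.2.1
  obtain ⟨N', hN'⟩ := hf.2.1
  by_contra hne
  have hbdd : BddAbove {k | e k ≠ f k} := ⟨max N N', fun k hk => by
    by_contra h
    exact hk ((hN k (by omega)).trans (hN' k (by omega)).symm)⟩
  obtain ⟨k, hk, hkmax⟩ := hbdd.exists_isGreatest_of_nonempty (Function.ne_iff.mp hne)
  refine hk (he.eq_of_tailSum_eq hf (tailSum_congr fun l hkl => ?_))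
  by_contra hl
  exact absurd (hkmax hl) (not_le.mpr hkl)

end GreedyRep

section Admissible

variable {S Q : ℕ → ℕ} {F : Finset ℕ}

-- Finsets stand for the supports of `{0, 1}`-digit sequences.
def Admissible (Q : ℕ → ℕ) (F : Finset ℕ) : Prop :=
  ∀ a ∈ F, ∀ b ∈ F, b < a → b < Q (a + 1)

theorem Admissible.mono {G : Finset ℕ} (hF : Admissible Q F) (hGF : G ⊆ F) : Admissible Q G :=
  fun a ha b hb hba => hF a (hGF ha) b (hGF hb) hba

theorem Admissible.insert {i : ℕ} (hF : Admissible Q F) (hFi : ∀ b ∈ F, b < Q (i + 1))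
    (hQi : Q (i + 1) ≤ i) : Admissible Q (insert i F) := by
  intro a ha b hb hba
  rcases mem_insert.mp ha with rfl | ha
  · exact hFi b ((mem_insert.mp hb).resolve_left hba.ne)
  · have hai : a < i := (hFi a ha).trans_le hQi
    rcases mem_insert.mp hb with rfl | hb
    · exact absurd (hba.trans hai) (lt_irrefl _)
    · exact hF a ha b hb hba

theorem Admissible.sum_lt (hpos : ∀ k, 0 < S k) (hmono : Monotone S)
    (hrec : ∀ k, 1 ≤ k → S k = S (k - 1) + S (Q k)) (hF : Admissible Q F) {M : ℕ}
    (hFM : ∀ a ∈ F, a < M) : ∑ k ∈ F, S k < S M := by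
  induction F using Finset.induction_on_max generalizing M with
  | empty => simpa using hpos M
  | insert a F hFa ih =>
    have hsum : ∑ k ∈ F, S k < S (Q (a + 1)) :=
      ih (hF.mono (subset_insert a F)) fun b hb => hF a (mem_insert_self a F) b
        (mem_insert_of_mem hb) (hFa b hb)
    have hSa : S (a + 1) = S a + S (Q (a + 1)) := hrec (a + 1) a.succ_pos
    have hSM : S (a + 1) ≤ S M := hmono (hFM a (mem_insert_self a F))
    rw [sum_insert fun h => lt_irrefl a (hFa a h)]
    omega

theorem Admissible.mem_iff_isGreatest (hpos : ∀ k, 0 < S k) (hmono : StrictMono S)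
    (hrec : ∀ k, 1 ≤ k → S k = S (k - 1) + S (Q k)) (hF : Admissible Q F) (i : ℕ) :
    i ∈ F ↔ IsGreatest {j | S j ≤ ∑ k ∈ F with k ≤ i, S k} i := by
  have hadm : Admissible Q (F.filter (· ≤ i)) := hF.mono (filter_subset _ F)
  constructor
  · intro hi
    refine ⟨single_le_sum (fun _ _ => Nat.zero_le _) (mem_filter.mpr ⟨hi, le_rfl⟩), ?_⟩
    intro j hj
    have hlt : ∑ k ∈ F with k ≤ i, S k < S (i + 1) :=
      hadm.sum_lt hpos hmono.monotone hrec fun a ha => Nat.lt_succ_of_le (mem_filter.mp ha).2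
    exact Nat.le_of_lt_succ (hmono.lt_iff_lt.mp (lt_of_le_of_lt hj hlt))
  · intro hi
    by_contra hiF
    have hlt : ∑ k ∈ F with k ≤ i, S k < S i := by
      refine hadm.sum_lt hpos hmono.monotone hrec fun a ha => ?_
      obtain ⟨haF, hai⟩ := mem_filter.mp ha
      exact lt_of_le_of_ne hai fun h => hiF (h ▸ haF)
    exact absurd hi.1 (not_le.mpr hlt)

theorem Admissible.isGreedyRep (hpos : ∀ k, 0 < S k) (hmono : StrictMono S)
    (hrec : ∀ k, 1 ≤ k → S k = S (k - 1) + S (Q k)) (hF : Admissible Q F) :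
    IsGreedyRep S (∑ k ∈ F, S k) (fun k => if k ∈ F then 1 else 0) := by
  refine ⟨fun i => by dsimp only; split <;> omega,
    ⟨F.sup id + 1, fun i hi => if_neg fun hiF => ?_⟩, ?_, fun i => ?_⟩
  · have := le_sup (f := id) hiF
    simp only [id] at this
    omega
  · rw [← tsum_ite_mem_eq_sum]
    congr 1
    ext k
    split <;> simp [*]
  · have hsplit := sum_filter_add_sum_filter_not F (fun k => i < k) S
    simp only [not_lt] at hsplit
    rw [tailSum_ite_mem, ← hsplit, Nat.add_sub_cancel_left,
      ← hF.mem_iff_isGreatest hpos hmono hrec]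
    simp only [ite_eq_left_iff, zero_ne_one, imp_false, not_not]

end Admissible

theorem StrictMono.exists_le_lt_succ {S : ℕ → ℕ} (hmono : StrictMono S) {n : ℕ} (h0 : S 0 ≤ n) :
    ∃ i, S i ≤ n ∧ n < S (i + 1) := by
  refine ⟨Nat.findGreatest (S · ≤ n) n, Nat.findGreatest_spec (P := (S · ≤ n)) n.zero_le h0, ?_⟩
  by_contra! h
  exact Nat.not_succ_le_self _ (Nat.le_findGreatest (P := (S · ≤ n)) ((hmono.id_le _).trans h) h)

theorem exists_admissible_sum_eq {S Q : ℕ → ℕ} (hS0 : S 0 = 1) (hmono : StrictMono S)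
    (hQ : ∀ k, 1 ≤ k → Q k < k) (hrec : ∀ k, 1 ≤ k → S k = S (k - 1) + S (Q k)) (n : ℕ) :
    ∃ F, Admissible Q F ∧ ∑ k ∈ F, S k = n := by
  induction n using Nat.strong_induction_on with
  | _ n ih =>
  rcases n.eq_zero_or_pos with rfl | hn
  · exact ⟨∅, fun a ha => absurd ha (notMem_empty a), sum_empty⟩
  obtain ⟨i, hin, hni⟩ := hmono.exists_le_lt_succ (n := n) (by omega)
  have hSi : 0 < S i := hS0.symm.trans_le (hmono.monotone i.zero_le)
  have hrec_i : S (i + 1) = S i + S (Q (i + 1)) := hrec (i + 1) i.succ_pos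
  obtain ⟨F, hF, hFsum⟩ := ih (n - S i) (by omega)
  have hFQ : ∀ b ∈ F, b < Q (i + 1) := fun b hb => hmono.lt_iff_lt.mp <|
    calc S b ≤ ∑ k ∈ F, S k := single_le_sum (fun _ _ => Nat.zero_le _) hb
      _ = n - S i := hFsum
      _ < S (Q (i + 1)) := by omega
  have hQi : Q (i + 1) ≤ i := Nat.le_of_lt_succ (hQ (i + 1) i.succ_pos)
  refine ⟨insert i F, hF.insert hFQ hQi, ?_⟩
  rw [sum_insert fun hi => absurd (hFQ i hi) (not_lt.mpr hQi), hFsum]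
  omega

/-- Every `n : ℕ` has a unique greedy representation in the cutting-time base, and this
representation is admissible: `e_i = 1` implies `e_j = 0` for all `Q(i+1) ≤ j < i`. -/
theorem greedy_rep_exists_unique_and_admissible (S Q : ℕ → ℕ)
    (hS0 : S 0 = 1) (hmono : StrictMono S)
    (hQ : ∀ k, 1 ≤ k → Q k < k) (hrec : ∀ k, 1 ≤ k → S k = S (k - 1) + S (Q k)) :
    ∀ n : ℕ, (∃! e : ℕ → ℕ, IsGreedyRep S n e) ∧
      (∀ e : ℕ → ℕ, IsGreedyRep S n e →
        ∀ i j, e i = 1 → Q (i + 1) ≤ j → j < i → e j = 0) := by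
  have hpos : ∀ k, 0 < S k := fun k => hS0.symm.trans_le (hmono.monotone k.zero_le)
  intro n
  obtain ⟨F, hF, rfl⟩ := exists_admissible_sum_eq hS0 hmono hQ hrec n
  have hrep := hF.isGreedyRep hpos hmono hrec
  refine ⟨⟨_, hrep, fun e he => he.unique hrep⟩, fun e he i j hi hQj hji => ?_⟩
  obtain rfl := he.unique hrep
  have hiF : i ∈ F := by
    by_contra h
    simp [h] at hi
  have hjF : j ∉ F := fun hj => absurd hQj (not_le.mpr (hF i hiF j hj hji))
  simp [hjF]
end

section
/- Let E = { e ∈ {0,1}^ℕ : e_i = 1 ⟹ e_j = 0 for all Q(i+1) ≤ j < i }. Then for every e ∈ E and every j ≥ 0, one has e_0 S_0 + e_1 S_1 + ⋯ + e_j S_j < S_{j+1}. -/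
/-- The number-system space `E` associated to a kneading map `Q`:
0-1 sequences with `e_i = 1 ⟹ e_j = 0` for all `Q(i+1) ≤ j < i`. -/
def Eset (Q : ℕ → ℕ) : Set (ℕ → ℕ) :=
  {e | (∀ i, e i ≤ 1) ∧ ∀ i j, e i = 1 → Q (i + 1) ≤ j → j < i → e j = 0}

/-! If `e_j = 1`, admissibility kills the digits `e_i` with `Q(j+1) ≤ i < j`, so the partial sum
below `j` is a partial sum below `Q(j+1)`; by induction it is `< S_{Q(j+1)}`, and adding `S_j`
stays below `S_j + S_{Q(j+1)} = S_{j+1}`. -/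

theorem sum_range_eq_sum_range_of_eq_one_of_mem_Eset {Q e : ℕ → ℕ} (he : e ∈ Eset Q) {j : ℕ}
    (hj : e j = 1) (hQj : Q (j + 1) ≤ j) (f : ℕ → ℕ) :
    ∑ i ∈ Finset.range j, e i * f i = ∑ i ∈ Finset.range (Q (j + 1)), e i * f i := by
  rw [← Finset.sum_range_add_sum_Ico _ hQj, add_eq_left]
  refine Finset.sum_eq_zero fun i hi => ?_
  rw [Finset.mem_Ico] at hi
  rw [he.2 j i hj hi.1 hi.2, zero_mul]

theorem sum_range_mul_lt_of_mem_Eset {S Q : ℕ → ℕ} (hS0 : 0 < S 0) (hQ : ∀ k, 1 ≤ k → Q k < k)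
    (hrec : ∀ k, 1 ≤ k → S k = S (k - 1) + S (Q k)) {e : ℕ → ℕ} (he : e ∈ Eset Q) (n : ℕ) :
    ∑ i ∈ Finset.range n, e i * S i < S n := by
  induction n using Nat.strong_induction_on with
  | _ n ih =>
    rcases n with _ | j
    · simpa using hS0
    have hSj : S (j + 1) = S j + S (Q (j + 1)) := hrec (j + 1) j.succ_pos
    have hQj : Q (j + 1) < j + 1 := hQ (j + 1) j.succ_pos
    rw [Finset.sum_range_succ]
    rcases Nat.le_one_iff_eq_zero_or_eq_one.mp (he.1 j) with hj | hj
    · have ih_j := ih j j.lt_succ_self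
      rw [hj, zero_mul]
      omega
    · have hsum := sum_range_eq_sum_range_of_eq_one_of_mem_Eset he hj (Nat.le_of_lt_succ hQj) S
      have ih_Q := ih (Q (j + 1)) hQj
      rw [hj, one_mul]
      omega

theorem partial_sums_lt_general (S Q : ℕ → ℕ) (hS0 : S 0 = 1)
    (hQ : ∀ k, 1 ≤ k → Q k < k) (hrec : ∀ k, 1 ≤ k → S k = S (k - 1) + S (Q k))
    (e : ℕ → ℕ) (he : e ∈ Eset Q) :
    ∀ j : ℕ, (∑ i ∈ Finset.range (j + 1), e i * S i) < S (j + 1) :=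
  fun j => sum_range_mul_lt_of_mem_Eset (hS0 ▸ Nat.one_pos) hQ hrec he (j + 1)

/-- For every `e ∈ E` and every `j ≥ 0`, one has `e_0 S_0 + ⋯ + e_j S_j < S_{j+1}`. -/
theorem partial_sums_lt (S Q : ℕ → ℕ) (hS0 : S 0 = 1) (hmono : StrictMono S)
    (hQ : ∀ k, 1 ≤ k → Q k < k) (hrec : ∀ k, 1 ≤ k → S k = S (k - 1) + S (Q k))
    (e : ℕ → ℕ) (he : e ∈ Eset Q) :
    ∀ j : ℕ, (∑ i ∈ Finset.range (j + 1), e i * S i) < S (j + 1) :=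
  partial_sums_lt_general S Q hS0 hQ hrec e he
end

section
/- Let α: E → E be the 'add 1 and carry' map on the number system E associated to cutting times (S_k). For e ∈ E with non-zero entries at indices q_0 < q_1 < q_2 < ⋯ (infinitely many), α(e) = ⟨0⟩ (the all-zero sequence) if and only if Q(q_0 + 1) = 0 and Q(q_j + 1) = q_{j−1} + 1 for all j ≥ 1. -/
lemma head_lt (S Q : ℕ → ℕ) (hS0 : S 0 = 1) (hmono : StrictMono S)
    (hQlt : ∀ k, 1 ≤ k → Q k < k) (hrec : ∀ k, 1 ≤ k → S k = S (k - 1) + S (Q k))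
    (e : ℕ → ℕ) (he : e ∈ Eset Q) (i : ℕ) :
    ∑ j ∈ Finset.range (i+1), e j * S j < S (i+1) := by
  induction i using Nat.strong_induction_on with
  | _ i IH =>
  have hle : e i ≤ 1 := he.1 i
  rcases Nat.le_one_iff_eq_zero_or_eq_one.mp hle with h0 | h1
  · -- e i = 0
    rw [Finset.sum_range_succ, h0, zero_mul, add_zero]
    rcases Nat.eq_zero_or_pos i with rfl | hi
    · simpa using (hmono (by norm_num : (0:ℕ) < 1)).trans_le' (by simp)
    · obtain ⟨k, rfl⟩ := Nat.exists_eq_add_of_le hi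
      have := IH k (by omega)
      calc ∑ j ∈ Finset.range (1+k), e j * S j = ∑ j ∈ Finset.range (k+1), e j * S j := by ring_nf
        _ < S (k+1) := this
        _ < S (1+k+1) := hmono (by omega)
  · -- e i = 1
    have hz : ∀ j, Q (i+1) ≤ j → j < i → e j = 0 := fun j h1' h2' => he.2 i j h1 h1' h2'
    have hsplit : ∑ j ∈ Finset.range i, e j * S j = ∑ j ∈ Finset.range (Q (i+1)), e j * S j := by
      have hsub : Finset.range (Q (i+1)) ⊆ Finset.range i := by
        apply Finset.range_subset_range.mpr
        have := hQlt (i+1) (by omega)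
        omega
      refine (Finset.sum_subset hsub ?_).symm
      intro j hj hj'
      simp only [Finset.mem_range] at hj hj'
      rw [hz j (by omega) hj, zero_mul]
    rw [Finset.sum_range_succ, h1, one_mul, hsplit]
    rw [hrec (i+1) (by omega)]
    simp only [Nat.add_sub_cancel]
    rw [add_comm (S i)]
    apply Nat.add_lt_add_right
    rcases Nat.eq_zero_or_pos (Q (i+1)) with hQ0 | hQpos
    · rw [hQ0]
      simp [hS0]
    · obtain ⟨t, ht⟩ := Nat.exists_eq_add_of_le hQpos
      have hti : t < i := by have := hQlt (i+1) (by omega); omega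
      have := IH t hti
      rw [ht, add_comm 1 t]
      exact this

lemma tail_eq (S e : ℕ → ℕ) (N : ℕ) (hN : ∀ j, N ≤ j → e j = 0) (i : ℕ) :
    tailSum S e i = ∑ k ∈ Finset.range N, if i < k then e k * S k else 0 := by
  apply tsum_eq_sum
  intro k hk
  simp only [Finset.mem_range, not_lt] at hk
  rw [hN k hk]
  simp

lemma total_split (S e : ℕ → ℕ) (N : ℕ) (hN : ∀ j, N ≤ j → e j = 0) (i : ℕ) :
    (∑ k ∈ Finset.range N, e k * S k)
      = (∑ k ∈ Finset.range (i+1), e k * S k)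
        + ∑ k ∈ Finset.range N, (if i < k then e k * S k else 0) := by
  set M := max N (i+1) with hM
  have h1 : (∑ k ∈ Finset.range N, e k * S k) = ∑ k ∈ Finset.range M, e k * S k := by
    refine Finset.sum_subset (Finset.range_subset_range.mpr (le_max_left _ _)) ?_
    intro k hk hk'
    simp only [Finset.mem_range, not_lt] at hk'
    rw [hN k hk']; simp
  have h2 : (∑ k ∈ Finset.range (i+1), e k * S k)
      = ∑ k ∈ Finset.range M, (if i < k then 0 else e k * S k) := by
    rw [← Finset.sum_subset (Finset.range_subset_range.mpr (le_max_right N (i+1)))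
      (fun k hk hk' => by
        simp only [Finset.mem_range, not_lt] at hk'
        rw [if_pos (by omega)])]
    apply Finset.sum_congr rfl
    intro k hk
    simp only [Finset.mem_range] at hk
    simp [Nat.lt_succ_iff.mp hk, not_lt.mpr (Nat.lt_succ_iff.mp hk)]
  have h3 : (∑ k ∈ Finset.range N, (if i < k then e k * S k else 0))
      = ∑ k ∈ Finset.range M, (if i < k then e k * S k else 0) := by
    refine Finset.sum_subset (Finset.range_subset_range.mpr (le_max_left _ _)) ?_
    intro k hk hk'
    simp only [Finset.mem_range, not_lt] at hk'
    rw [hN k hk']; simp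
  rw [h1, h2, h3, ← Finset.sum_add_distrib]
  apply Finset.sum_congr rfl
  intro k _
  by_cases h : i < k <;> simp [h]

lemma sub_tail (S e : ℕ → ℕ) (N : ℕ) (hN : ∀ j, N ≤ j → e j = 0) (i : ℕ) :
    (∑ k ∈ Finset.range N, e k * S k) - tailSum S e i
      = ∑ k ∈ Finset.range (i+1), e k * S k := by
  rw [tail_eq S e N hN i, total_split S e N hN i, Nat.add_sub_cancel]

lemma greedy_of_admissible (S Q : ℕ → ℕ) (hS0 : S 0 = 1) (hmono : StrictMono S)
    (hQlt : ∀ k, 1 ≤ k → Q k < k) (hrec : ∀ k, 1 ≤ k → S k = S (k - 1) + S (Q k))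
    (e : ℕ → ℕ) (he : e ∈ Eset Q) (N : ℕ) (hN : ∀ j, N ≤ j → e j = 0) :
    IsGreedyRep S (∑ k ∈ Finset.range N, e k * S k) e := by
  have hpos : 0 < S 0 := by rw [hS0]; norm_num
  refine ⟨he.1, ⟨N, hN⟩, (tsum_eq_sum (fun k hk => by
      simp only [Finset.mem_range, not_lt] at hk
      rw [hN k hk]; simp)).symm, ?_⟩
  intro i
  rw [sub_tail S e N hN i]
  constructor
  · intro h1
    constructor
    · show S i ≤ _
      calc S i = e i * S i := by rw [h1, one_mul]
        _ ≤ _ := Finset.single_le_sum (f := fun k => e k * S k)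
            (fun k _ => Nat.zero_le _) (Finset.self_mem_range_succ i)
    · intro j hj
      have hlt : S j < S (i+1) :=
        lt_of_le_of_lt hj (head_lt S Q hS0 hmono hQlt hrec e he i)
      exact Nat.lt_succ_iff.mp (hmono.lt_iff_lt.mp hlt)
  · intro hg
    by_contra hne
    have h0 : e i = 0 := by have := he.1 i; omega
    have hlt : (∑ k ∈ Finset.range (i+1), e k * S k) < S i := by
      rw [Finset.sum_range_succ, h0, zero_mul, add_zero]
      rcases Nat.eq_zero_or_pos i with rfl | hi
      · simpa using hpos
      · obtain ⟨t, rfl⟩ := Nat.exists_eq_add_of_le hi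
        have := head_lt S Q hS0 hmono hQlt hrec e he t
        calc ∑ j ∈ Finset.range (1+t), e j * S j
            = ∑ j ∈ Finset.range (t+1), e j * S j := by rw [add_comm]
          _ < S (t+1) := this
          _ = S (1+t) := by rw [add_comm]
    exact absurd hg.1 (not_le.mpr hlt)

lemma greedy_zero (S : ℕ → ℕ) (hS0 : S 0 = 1) (hmono : StrictMono S) :
    IsGreedyRep S 0 (fun _ => 0) := by
  refine ⟨fun _ => Nat.zero_le _, ⟨0, fun _ _ => rfl⟩, by simp, ?_⟩
  intro i
  simp only [Nat.zero_sub]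
  constructor
  · intro h; exact absurd h (by norm_num)
  · intro hg
    have : S i ≤ 0 := hg.1
    have : 0 < S i := by
      rcases Nat.eq_zero_or_pos i with rfl | hi
      · omega
      · have := hmono hi; omega
    omega

lemma greedy_add_top (S : ℕ → ℕ) (hS0 : S 0 = 1) (hmono : StrictMono S)
    (g : ℕ → ℕ) (t p : ℕ) (hg : IsGreedyRep S t g)
    (hsupp : ∀ j, p ≤ j → g j = 0) (hub : t + S p < S (p+1)) :
    IsGreedyRep S (t + S p) (fun j => if j = p then 1 else g j) := by
  obtain ⟨hle, ⟨N, hNe⟩, hsum, hiff⟩ := hg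
  set g' : ℕ → ℕ := fun j => if j = p then 1 else g j with hg'
  have hg'supp : ∀ j, p + 1 ≤ j → g' j = 0 := by
    intro j hj
    simp only [hg']
    rw [if_neg (by omega)]
    exact hsupp j (by omega)
  have hgsum : t = ∑ k ∈ Finset.range p, g k * S k := by
    rw [hsum]
    exact tsum_eq_sum (fun k hk => by
      simp only [Finset.mem_range, not_lt] at hk
      rw [hsupp k hk]; simp)
  have hg'sum : ∑ k ∈ Finset.range (p+1), g' k * S k = t + S p := by
    rw [Finset.sum_range_succ]
    simp only [hg', if_pos rfl, one_mul]
    congr 1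
    rw [hgsum]
    apply Finset.sum_congr rfl
    intro k hk
    simp only [Finset.mem_range] at hk
    rw [if_neg (by omega)]
  -- tails
  have htail_ge : ∀ i, p ≤ i → tailSum S g' i = 0 := by
    intro i hi
    rw [tail_eq S g' (p+1) hg'supp i]
    apply Finset.sum_eq_zero
    intro k hk
    simp only [Finset.mem_range] at hk
    by_cases h : i < k
    · rw [if_pos h]
      simp only [hg']
      rw [if_neg (by omega)]
      rw [hsupp k (by omega)]; simp
    · rw [if_neg h]
  have htail_lt : ∀ i, i < p → tailSum S g' i = tailSum S g i + S p := by
    intro i hi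
    rw [tail_eq S g' (p+1) hg'supp i, tail_eq S g (p+1) (fun j hj => hsupp j (by omega)) i,
      Finset.sum_range_succ, Finset.sum_range_succ]
    have h1 : (if i < p then g' p * S p else 0) = S p := by
      rw [if_pos hi]; simp [hg']
    have h2 : (if i < p then g p * S p else 0) = 0 := by
      rw [hsupp p le_rfl]; simp
    have h3 : ∀ k ∈ Finset.range p, (if i < k then g' k * S k else 0)
        = (if i < k then g k * S k else 0) := by
      intro k hk
      simp only [Finset.mem_range] at hk
      have hk' : g' k = g k := by simp only [hg']; rw [if_neg (by omega)]
      rw [hk']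
    rw [Finset.sum_congr rfl h3, h1, h2, add_zero]
  refine ⟨?_, ⟨p+1, hg'supp⟩, ?_, ?_⟩
  · intro i
    simp only [hg']
    split
    · exact le_rfl
    · exact hle i
  · rw [← hg'sum]
    exact (tsum_eq_sum (fun k hk => by
      simp only [Finset.mem_range, not_lt] at hk
      rw [hg'supp k hk]; simp)).symm
  · intro i
    rcases lt_trichotomy i p with hip | heq | hip
    · rw [htail_lt i hip]
      have : t + S p - (tailSum S g i + S p) = t - tailSum S g i := by omega
      rw [this]
      simp only [hg', if_neg (by omega : i ≠ p)]
      exact hiff i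
    · subst heq
      rw [htail_ge i le_rfl]
      simp only [hg', if_pos rfl, Nat.sub_zero]
      constructor
      · intro _
        constructor
        · show S i ≤ t + S i; omega
        · intro j hj
          have : S j < S (i+1) := lt_of_le_of_lt hj hub
          exact Nat.lt_succ_iff.mp (hmono.lt_iff_lt.mp this)
      · intro _; trivial
    · rw [htail_ge i (by omega)]
      simp only [Nat.sub_zero, hg', if_neg (by omega : i ≠ p)]
      rw [hsupp i (by omega)]
      constructor
      · intro h; exact absurd h (by norm_num)
      · intro hgr
        have h1 : S i ≤ t + S p := hgr.1
        have h2 : S (p+1) ≤ S i := hmono.le_iff_le.mpr (by omega)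
        omega


/-- Characterization of the α-preimages of `⟨0⟩`: for `e ∈ E` with infinitely many ones,
at positions `q_0 < q_1 < ⋯`, the add-and-carry map `α` (the continuous extension of
`⟨n⟩ ↦ ⟨n+1⟩` to `E`, the closure of the integer codings) sends `e` to the zero sequence
iff `Q(q_0 + 1) = 0` and `Q(q_j + 1) = q_{j-1} + 1` for all `j ≥ 1`. -/
theorem alpha_eq_zero_iff (S Q : ℕ → ℕ) (hS0 : S 0 = 1) (hmono : StrictMono S)
    (hQlt : ∀ k, 1 ≤ k → Q k < k) (hrec : ∀ k, 1 ≤ k → S k = S (k - 1) + S (Q k))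
    (hQinf : Filter.Tendsto Q Filter.atTop Filter.atTop)
    (α : (ℕ → ℕ) → (ℕ → ℕ))
    (hmaps : Set.MapsTo α (Eset Q) (Eset Q))
    (hcont : ContinuousOn α (Eset Q))
    (hagree : ∀ (n : ℕ) (e e' : ℕ → ℕ),
      IsGreedyRep S n e → IsGreedyRep S (n + 1) e' → α e = e')
    (hclos : Eset Q = closure {e | ∃ n : ℕ, IsGreedyRep S n e})
    (e : ℕ → ℕ) (he : e ∈ Eset Q) (q : ℕ → ℕ) (hqmono : StrictMono q)
    (hq : ∀ i, e i = 1 ↔ ∃ j, q j = i) :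
    α e = (fun _ => 0) ↔
      (Q (q 0 + 1) = 0 ∧ ∀ j, 1 ≤ j → Q (q j + 1) = q (j - 1) + 1) := by
  classical
  have heq1 : ∀ m, e (q m) = 1 := fun m => (hq (q m)).mpr ⟨m, rfl⟩
  have heq0 : ∀ i, (∀ m, q m ≠ i) → e i = 0 := by
    intro i hi
    rcases Nat.le_one_iff_eq_zero_or_eq_one.mp (he.1 i) with h | h
    · exact h
    · obtain ⟨m, hm⟩ := (hq i).mp h
      exact absurd hm (hi m)
  -- truncations
  set trunc : ℕ → (ℕ → ℕ) := fun m i => if i ≤ q m then e i else 0 with htrunc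
  have htr : ∀ m, trunc m ∈ Eset Q := by
    intro m
    constructor
    · intro i
      simp only [htrunc]
      split
      · exact he.1 i
      · exact Nat.zero_le _
    · intro i j h1 h2 h3
      simp only [htrunc] at h1 ⊢
      split at h1
      · rw [he.2 i j h1 h2 h3]
        simp
      · exact absurd h1 one_ne_zero.symm
  have htrsupp : ∀ m j, q m + 1 ≤ j → trunc m j = 0 := by
    intro m j hj
    simp only [htrunc]
    rw [if_neg (by omega)]
  -- the integers n m
  set n : ℕ → ℕ := fun m => ∑ k ∈ Finset.range (q m + 1), e k * S k with hn
  have hgr : ∀ m, IsGreedyRep S (n m) (trunc m) := by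
    intro m
    have := greedy_of_admissible S Q hS0 hmono hQlt hrec (trunc m) (htr m) (q m + 1)
      (htrsupp m)
    have hsum : ∑ k ∈ Finset.range (q m + 1), trunc m k * S k = n m := by
      apply Finset.sum_congr rfl
      intro k hk
      simp only [Finset.mem_range] at hk
      simp only [htrunc]
      rw [if_pos (by omega)]
    rwa [hsum] at this
  have hgap : ∀ m k, q m < k → k < q (m+1) → e k = 0 := by
    intro m k h1 h2
    apply heq0
    intro j hj
    rcases lt_or_ge j (m+1) with hjm | hjm
    · have : q j ≤ q m := hqmono.le_iff_le.mpr (by omega)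
      omega
    · have : q (m+1) ≤ q j := hqmono.le_iff_le.mpr hjm
      omega
  have hstep : ∀ m, n (m+1) = n m + S (q (m+1)) := by
    intro m
    simp only [hn]
    rw [Finset.sum_range_succ, heq1 (m+1), one_mul]
    congr 1
    refine (Finset.sum_subset (Finset.range_subset_range.mpr ?_) ?_).symm
    · have : q m < q (m+1) := hqmono (by omega)
      omega
    · intro k hk hk'
      simp only [Finset.mem_range, not_lt] at hk hk'
      rw [hgap m k (by omega) (by omega)]
      simp
  have hn0 : n 0 = S (q 0) := by
    simp only [hn]
    rw [Finset.sum_range_succ, heq1 0, one_mul]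
    have : ∑ k ∈ Finset.range (q 0), e k * S k = 0 := by
      apply Finset.sum_eq_zero
      intro k hk
      simp only [Finset.mem_range] at hk
      have : e k = 0 := by
        apply heq0
        intro j hj
        have : q 0 ≤ q j := hqmono.le_iff_le.mpr (Nat.zero_le j)
        omega
      rw [this, zero_mul]
    rw [this, zero_add]
  have hlt : ∀ m, n m < S (q m + 1) := fun m =>
    head_lt S Q hS0 hmono hQlt hrec e he (q m)
  -- the key predicate
  set P : ℕ → Prop := fun m => n m + 1 = S (q m + 1) with hP
  have hP0 : P 0 ↔ Q (q 0 + 1) = 0 := by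
    simp only [hP]
    rw [hrec (q 0 + 1) (by omega), Nat.add_sub_cancel, hn0]
    constructor
    · intro h
      have h1 : S (Q (q 0 + 1)) = S 0 := by rw [hS0]; omega
      exact hmono.injective h1
    · intro h
      rw [h, hS0]
  have hQub : ∀ m, q m + 1 ≤ Q (q (m+1) + 1) := by
    intro m
    by_contra hcon
    push_neg at hcon
    have hql : q m < q (m+1) := hqmono (Nat.lt_succ_self m)
    have := he.2 (q (m+1)) (q m) (heq1 (m+1)) (by omega) hql
    rw [heq1 m] at this
    exact one_ne_zero this
  have hPstep : ∀ m, P (m+1) ↔ (P m ∧ Q (q (m+1) + 1) = q m + 1) := by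
    intro m
    simp only [hP]
    rw [hrec (q (m+1) + 1) (by omega), Nat.add_sub_cancel, hstep m]
    have hSQ : S (q m + 1) ≤ S (Q (q (m+1) + 1)) := hmono.le_iff_le.mpr (hQub m)
    have hlt' := hlt m
    constructor
    · intro h
      have h2 : n m + 1 = S (Q (q (m+1) + 1)) := by omega
      have h3 : Q (q (m+1) + 1) = q m + 1 := by
        by_contra hc
        have h4 : q m + 2 ≤ Q (q (m+1) + 1) := by
          have := hQub m; omega
        have h5 : S (q m + 1) < S (Q (q (m+1) + 1)) := hmono (by omega)
        omega
      refine ⟨by rw [h3] at h2; omega, h3⟩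
    · rintro ⟨h1, h2⟩
      rw [h2]
      omega
  have hPall : (∀ m, P m) ↔ (Q (q 0 + 1) = 0 ∧ ∀ j, 1 ≤ j → Q (q j + 1) = q (j - 1) + 1) := by
    constructor
    · intro h
      refine ⟨hP0.mp (h 0), ?_⟩
      intro j hj
      obtain ⟨k, rfl⟩ : ∃ k, j = k + 1 := ⟨j - 1, by omega⟩
      simpa using ((hPstep k).mp (h (k+1))).2
    · rintro ⟨h0, hs⟩ m
      induction m with
      | zero => exact hP0.mpr h0
      | succ k ih =>
        refine (hPstep k).mpr ⟨ih, ?_⟩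
        simpa using hs (k+1) (by omega)
  -- topology: trunc m → e within Eset Q, hence α (trunc m) → α e
  have htt : Filter.Tendsto trunc Filter.atTop (nhds e) := by
    rw [tendsto_pi_nhds]
    intro i
    apply Filter.Tendsto.congr' (f₁ := fun _ => e i)
    · filter_upwards [Filter.eventually_ge_atTop i] with m hm
      have : i ≤ q m := le_trans hm hqmono.le_apply
      simp only [htrunc]
      rw [if_pos this]
    · exact tendsto_const_nhds
  have httw : Filter.Tendsto trunc Filter.atTop (nhdsWithin e (Eset Q)) :=
    tendsto_nhdsWithin_of_tendsto_nhds_of_eventually_within _ htt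
      (Filter.Eventually.of_forall htr)
  have hαt : Filter.Tendsto (fun m => α (trunc m)) Filter.atTop (nhds (α e)) :=
    Filter.Tendsto.comp (hcont e he) httw
  have hcoord : ∀ i, ∃ M, ∀ m, M ≤ m → α (trunc m) i = α e i := by
    intro i
    have h1 := (tendsto_pi_nhds.mp hαt) i
    have h2 : {α e i} ∈ nhds (α e i) := by
      rw [nhds_discrete]
      exact Filter.mem_pure.mpr rfl
    have h3 := Filter.mem_map.mp (h1 h2)
    rw [Filter.mem_atTop_sets] at h3
    obtain ⟨M, hM⟩ := h3
    exact ⟨M, fun m hm => by simpa using hM m hm⟩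
  constructor
  · -- forward: α e = 0 → condition
    intro hα0
    rw [← hPall]
    by_contra hcon
    push_neg at hcon
    -- minimal counterexample
    have hex : ∃ m, ¬ P m := hcon
    obtain ⟨m₀, hnP, hmin⟩ : ∃ m₀, ¬ P m₀ ∧ ∀ k, k < m₀ → P k := by
      refine ⟨Nat.find hex, Nat.find_spec hex, ?_⟩
      intro k hk
      by_contra hc
      exact Nat.lt_irrefl _ (lt_of_le_of_lt (Nat.find_le hc) hk)
    have hfail : ∀ d, ¬ P (m₀ + d) := by
      intro d
      induction d with
      | zero => exact hnP
      | succ k ih =>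
        intro hc
        have : m₀ + (k+1) = (m₀ + k) + 1 := by omega
        rw [this] at hc
        exact ih ((hPstep (m₀ + k)).mp hc).1
    -- build greedy reps of n (m₀ + d) + 1 with a persistent 1 at q m₀
    have hbuild : ∀ d, ∃ g, IsGreedyRep S (n (m₀ + d) + 1) g ∧
        (∀ j, q (m₀ + d) + 1 ≤ j → g j = 0) ∧ g (q m₀) = 1 := by
      intro d
      induction d with
      | zero =>
        rcases Nat.eq_zero_or_pos m₀ with h0 | hpos
        · -- m₀ = 0
          subst h0
          have hq0 : 1 ≤ q 0 := by
            by_contra hc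
            push_neg at hc
            apply hnP
            have hq00 : q 0 = 0 := by omega
            have hQ1 : Q 1 = 0 := by have := hQlt 1 le_rfl; omega
            simp only [hP]
            rw [hn0, hq00, hS0, hrec 1 le_rfl, hQ1, hS0]
          have h1 : IsGreedyRep S (0 + S 0) (fun j => if j = 0 then 1 else (fun _ => 0) j) :=
            greedy_add_top S hS0 hmono (fun _ => 0) 0 0 (greedy_zero S hS0 hmono)
              (fun _ _ => rfl) (by simpa [hS0] using hmono (Nat.lt_succ_self 0))
          rw [zero_add, hS0] at h1
          have hub : 1 + S (q 0) < S (q 0 + 1) := by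
            have := hlt 0
            have hne : n 0 + 1 ≠ S (q 0 + 1) := hnP
            rw [hn0] at this hne
            omega
          have h2' := greedy_add_top S hS0 hmono _ 1 (q 0) h1
            (fun j hj => by simp only []; rw [if_neg (by omega)]) hub
          have h2 : IsGreedyRep S (1 + S (q 0))
              (fun j => if j = q 0 then 1 else if j = 0 then 1 else 0) := h2'
          refine ⟨fun j => if j = q 0 then 1 else if j = 0 then 1 else 0, ?_, ?_, ?_⟩
          · have : 1 + S (q 0) = n (0 + 0) + 1 := by
              simp only [Nat.add_zero]
              rw [hn0]; omega
            rwa [this] at h2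
          · intro j hj
            simp only [Nat.add_zero] at hj ⊢
            rw [if_neg (by omega), if_neg (by omega)]
          · simp
        · -- m₀ = k + 1
          obtain ⟨k, rfl⟩ : ∃ k, m₀ = k + 1 := ⟨m₀ - 1, by omega⟩
          have hPk : P k := hmin k (Nat.lt_succ_self k)
          have hql : q k + 1 < q (k+1) := by
            have hle : q k + 1 ≤ q (k+1) := hqmono (Nat.lt_succ_self k)
            rcases Nat.lt_or_ge (q k + 1) (q (k+1)) with h | h
            · exact h
            · exfalso
              apply hnP
              have heqS : S (q k + 1) = S (q (k+1)) := by
                have heq : q k + 1 = q (k+1) := by omega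
                rw [heq]
              have hPk' : n k + 1 = S (q k + 1) := hPk
              have h3 := hstep k
              have h4 : S (q (k+1) + 1) = S (q (k+1)) + S (Q (q (k+1) + 1)) := by
                rw [hrec (q (k+1) + 1) (by omega), Nat.add_sub_cancel]
              have hub2 : S (Q (q (k+1) + 1)) ≤ S (q (k+1)) := by
                apply hmono.le_iff_le.mpr
                have := hQlt (q (k+1) + 1) (by omega)
                omega
              have h5 := hlt (k+1)
              show n (k+1) + 1 = S (q (k+1) + 1)
              omega
          have hδ : IsGreedyRep S (0 + S (q k + 1))
              (fun j => if j = q k + 1 then 1 else (fun _ => 0) j) :=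
            greedy_add_top S hS0 hmono (fun _ => 0) 0 (q k + 1) (greedy_zero S hS0 hmono)
              (fun _ _ => rfl) (by simpa using hmono (Nat.lt_succ_self (q k + 1)))
          rw [zero_add] at hδ
          have hub : S (q k + 1) + S (q (k+1)) < S (q (k+1) + 1) := by
            have h1 := hlt (k+1)
            have h2 : n (k+1) + 1 ≠ S (q (k+1) + 1) := hnP
            have h3 : n (k+1) = n k + S (q (k+1)) := hstep k
            simp only [hP] at hPk
            omega
          have h2' := greedy_add_top S hS0 hmono _ (S (q k + 1)) (q (k+1)) hδ
            (fun j hj => by simp only []; rw [if_neg (by omega)]) hub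
          have h2 : IsGreedyRep S (S (q k + 1) + S (q (k+1)))
              (fun j => if j = q (k+1) then 1 else if j = q k + 1 then 1 else 0) := h2'
          refine ⟨fun j => if j = q (k+1) then 1 else if j = q k + 1 then 1 else 0,
            ?_, ?_, ?_⟩
          · have heqn : S (q k + 1) + S (q (k+1)) = n ((k+1) + 0) + 1 := by
              simp only [Nat.add_zero]
              rw [hstep k]
              simp only [hP] at hPk
              omega
            rwa [heqn] at h2
          · intro j hj
            simp only [Nat.add_zero] at hj ⊢
            rw [if_neg (by omega), if_neg (by omega)]
          · simp
      | succ d ih =>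
        obtain ⟨g, hg, hgsupp, hgval⟩ := ih
        have hql : q (m₀ + d) < q (m₀ + d + 1) := hqmono (by omega)
        have hub : (n (m₀ + d) + 1) + S (q (m₀ + d + 1)) < S (q (m₀ + d + 1) + 1) := by
          have h1 := hlt (m₀ + d + 1)
          have h2 : ¬ P (m₀ + (d + 1)) := hfail (d+1)
          simp only [hP] at h2
          have h3 : n (m₀ + d + 1) = n (m₀ + d) + S (q (m₀ + d + 1)) := hstep (m₀ + d)
          have h4 : m₀ + (d + 1) = m₀ + d + 1 := by omega
          rw [h4] at h2
          omega
        have h2 := greedy_add_top S hS0 hmono g (n (m₀ + d) + 1) (q (m₀ + d + 1)) hg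
          (fun j hj => hgsupp j (by omega)) hub
        refine ⟨fun j => if j = q (m₀ + d + 1) then 1 else g j, ?_, ?_, ?_⟩
        · have heqn : (n (m₀ + d) + 1) + S (q (m₀ + d + 1)) = n (m₀ + (d + 1)) + 1 := by
            have h3 : n (m₀ + d + 1) = n (m₀ + d) + S (q (m₀ + d + 1)) := hstep (m₀ + d)
            have h4 : m₀ + (d + 1) = m₀ + d + 1 := by omega
            rw [h4, h3]
            omega
          rwa [heqn] at h2
        · intro j hj
          have h4 : m₀ + (d + 1) = m₀ + d + 1 := by omega
          rw [h4] at hj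
          simp only []
          rw [if_neg (by omega)]
          exact hgsupp j (by omega)
        · simp only []
          have : q m₀ ≠ q (m₀ + d + 1) := by
            have := hqmono (show m₀ < m₀ + d + 1 by omega)
            omega
          rw [if_neg this]
          exact hgval
    -- contradiction with convergence
    obtain ⟨M, hM⟩ := hcoord (q m₀)
    set m := max M m₀ with hm
    obtain ⟨g, hg, _, hgval⟩ := hbuild (m - m₀)
    have hmm : m₀ + (m - m₀) = m := by omega
    rw [hmm] at hg
    have hαm : α (trunc m) = g := hagree (n m) (trunc m) g (hgr m) hg
    have h1 : α (trunc m) (q m₀) = α e (q m₀) := hM m (le_max_left _ _)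
    rw [hα0, hαm, hgval] at h1
    exact one_ne_zero h1
  · -- backward: condition → α e = 0
    intro hcond
    have hall : ∀ m, P m := hPall.mpr hcond
    have hδ : ∀ m, IsGreedyRep S (n m + 1)
        (fun j => if j = q m + 1 then 1 else (fun _ => 0) j) := by
      intro m
      have h1 : IsGreedyRep S (0 + S (q m + 1))
          (fun j => if j = q m + 1 then 1 else (fun _ => 0) j) :=
        greedy_add_top S hS0 hmono (fun _ => 0) 0 (q m + 1) (greedy_zero S hS0 hmono)
          (fun _ _ => rfl) (by simpa using hmono (Nat.lt_succ_self (q m + 1)))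
      rw [zero_add] at h1
      have := hall m
      simp only [hP] at this
      rwa [← this] at h1
    have hαm : ∀ m, α (trunc m) = fun j => if j = q m + 1 then 1 else (fun _ => 0) j :=
      fun m => hagree (n m) (trunc m) _ (hgr m) (hδ m)
    funext i
    obtain ⟨M, hM⟩ := hcoord i
    have hmub : i ≤ q (max M i) := le_trans (le_max_right M i) hqmono.le_apply
    have h1 : α (trunc (max M i)) i = α e i := hM _ (le_max_left _ _)
    rw [hαm (max M i)] at h1
    simp only [] at h1
    rw [if_neg (by omega)] at h1
    exact h1.symm
end

section
/- Suppose Q(k) → ∞ and there is an infinite sequence (k_i) such that for all i and all k > k_i, either Q(k) ≥ k_i, or Q(k) < k_i and there are only finitely many l > k with Q^n(l) = k for some n ∈ ℕ. Then the add-and-carry map α is a homeomorphism of E; in particular the all-zero sequence ⟨0⟩ has exactly one α-preimage in E. -/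
namespace CuttingTimes

open Filter Set Topology

def partialSum (S e : ℕ → ℕ) (i : ℕ) : ℕ := ∑ j ∈ Finset.range i, e j * S j

section PartialSum

variable {S e : ℕ → ℕ}

lemma partialSum_succ (i : ℕ) : partialSum S e (i + 1) = partialSum S e i + e i * S i :=
  Finset.sum_range_succ _ _

lemma partialSum_congr {e' : ℕ → ℕ} {i : ℕ} (h : ∀ j < i, e j = e' j) :
    partialSum S e i = partialSum S e' i :=
  Finset.sum_congr rfl fun j hj => by rw [h j (Finset.mem_range.1 hj)]

lemma partialSum_mono : Monotone (partialSum S e) :=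
  monotone_nat_of_le_succ fun i => by rw [partialSum_succ]; exact Nat.le_add_right _ _

lemma partialSum_eq_of_forall_le_eq_zero {N M : ℕ} (hN : ∀ i, N ≤ i → e i = 0) (hM : N ≤ M) :
    partialSum S e M = partialSum S e N := by
  induction M, hM using Nat.le_induction with
  | base => rfl
  | succ M hM ih => rw [partialSum_succ, hN M hM, zero_mul, add_zero, ih]

lemma tsum_eq_partialSum {N : ℕ} (hN : ∀ i, N ≤ i → e i = 0) :
    ∑' i, e i * S i = partialSum S e N :=
  tsum_eq_sum fun i hi => by rw [hN i (by simpa using hi), zero_mul]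

lemma partialSum_sub_tailSum {N : ℕ} (hN : ∀ i, N ≤ i → e i = 0) (i : ℕ) :
    partialSum S e N - tailSum S e i = partialSum S e (i + 1) := by
  have hsplit : ∀ M, i + 1 ≤ M → partialSum S e M =
      (∑ k ∈ Finset.range M, if i < k then e k * S k else 0) + partialSum S e (i + 1) := by
    intro M hM
    induction M, hM using Nat.le_induction with
    | base => simp [Finset.sum_ite_of_false]
    | succ M hM ih => rw [Finset.sum_range_succ, if_pos (by omega), partialSum_succ, ih]; ring
  have htail : tailSum S e i = ∑ k ∈ Finset.range (max N (i + 1)), if i < k then e k * S k else 0 :=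
    tsum_eq_sum fun k hk => by simp [hN k (by simp at hk; omega)]
  rw [← partialSum_eq_of_forall_le_eq_zero hN (le_max_left N (i + 1)),
    hsplit _ (le_max_right _ _), htail, Nat.add_sub_cancel_left]

lemma partialSum_eq_of_lt (hS : Monotone S) {k i : ℕ} (hki : k ≤ i) (h : partialSum S e i < S k) :
    partialSum S e k = partialSum S e i := by
  induction i, hki using Nat.le_induction with
  | base => rfl
  | succ i hki ih =>
    rw [partialSum_succ] at h ⊢
    have hei : e i * S i < 1 * S i := by
      rw [one_mul]; exact (Nat.le_add_left _ _).trans_lt (h.trans_le (hS hki))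
    rw [Nat.lt_one_iff.1 (Nat.lt_of_mul_lt_mul_right hei), zero_mul, add_zero] at h ⊢
    exact ih h

end PartialSum

structure Admissible (S e : ℕ → ℕ) : Prop where
  le_one : ∀ j, e j ≤ 1
  partialSum_lt : ∀ i, partialSum S e i < S i

-- `S l - 1` is the largest value the first `l` digits of an admissible word can take.
def IsFullPrefix (S e : ℕ → ℕ) (l : ℕ) : Prop := partialSum S e l = S l - 1

instance (S e : ℕ → ℕ) : DecidablePred (IsFullPrefix S e) :=
  fun _ => inferInstanceAs (Decidable (_ = _))

namespace Admissible

variable {S v w : ℕ → ℕ}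

lemma apply_eq_div (hv : Admissible S v) (i : ℕ) : v i = partialSum S v (i + 1) / S i := by
  rw [partialSum_succ, Nat.add_mul_div_right _ _ ((Nat.zero_le _).trans_lt (hv.partialSum_lt i)),
    Nat.div_eq_of_lt (hv.partialSum_lt i), zero_add]

lemma partialSum_eq_mod (hv : Admissible S v) (i : ℕ) :
    partialSum S v i = partialSum S v (i + 1) % S i := by
  rw [partialSum_succ, Nat.add_mul_mod_self_right, Nat.mod_eq_of_lt (hv.partialSum_lt i)]

lemma eq_of_partialSum_eq (hv : Admissible S v) (hw : Admissible S w) {L : ℕ}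
    (h : partialSum S v L = partialSum S w L) : ∀ j < L, v j = w j := by
  induction L with
  | zero => intro j hj; omega
  | succ L ih =>
    intro j hj
    rcases Nat.lt_succ_iff_lt_or_eq.1 hj with hj | rfl
    · exact ih (by rw [hv.partialSum_eq_mod, hw.partialSum_eq_mod, h]) j hj
    · rw [hv.apply_eq_div, hw.apply_eq_div, h]

lemma eq_of_isFullPrefix (hv : Admissible S v) (hw : Admissible S w) {l : ℕ}
    (hvl : IsFullPrefix S v l) (hwl : IsFullPrefix S w l) : ∀ j < l, v j = w j :=
  hv.eq_of_partialSum_eq hw (hvl.trans hwl.symm)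

lemma isGreedyRep (hS : StrictMono S) (hv : Admissible S v) {N : ℕ} (hN : ∀ i, N ≤ i → v i = 0) :
    IsGreedyRep S (partialSum S v N) v := by
  refine ⟨hv.le_one, ⟨N, hN⟩, (tsum_eq_partialSum hN).symm, fun i => ?_⟩
  have hlt := hv.partialSum_lt i
  rw [partialSum_sub_tailSum hN, partialSum_succ]
  constructor
  · intro hi
    refine ⟨by simp [hi], fun j hj => ?_⟩
    have := hv.partialSum_lt (i + 1)
    rw [partialSum_succ] at this
    exact Nat.lt_succ_iff.1 (hS.lt_iff_lt.1 (lt_of_le_of_lt hj this))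
  · intro hi
    have := hi.1
    rcases Nat.le_one_iff_eq_zero_or_eq_one.1 (hv.le_one i) with h0 | h1
    · simp only [mem_ofPred_eq, h0, zero_mul, add_zero] at this; omega
    · exact h1

end Admissible

def carryAt (v : ℕ → ℕ) (l : ℕ) : ℕ → ℕ := fun j => if j < l then 0 else if j = l then 1 else v j

lemma partialSum_carryAt_of_le {S v : ℕ → ℕ} {l i : ℕ} (hi : i ≤ l) :
    partialSum S (carryAt v l) i = 0 :=
  Finset.sum_eq_zero fun j hj => by simp [carryAt, (Finset.mem_range.1 hj).trans_le hi]

lemma Admissible.eq_of_carryAt_eq {S v w : ℕ → ℕ} {l l' : ℕ} (hv : Admissible S v)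
    (hw : Admissible S w) (hvl : IsFullPrefix S v l) (hwl : IsFullPrefix S w l') (hv0 : v l = 0)
    (hw0 : w l' = 0) (h : carryAt v l = carryAt w l') : v = w := by
  obtain rfl : l = l' := by
    have h1 := congrFun h l
    have h2 := congrFun h l'
    rcases lt_trichotomy l l' with hlt | heq | hgt
    · simp [carryAt, hlt] at h1
    · exact heq
    · simp [carryAt, hgt] at h2
  funext j
  rcases lt_trichotomy j l with hj | rfl | hj
  · exact hv.eq_of_isFullPrefix hw hvl hwl j hj
  · rw [hv0, hw0]
  · simpa [carryAt, hj.not_gt, hj.ne'] using congrFun h j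

structure IsCuttingTimes (S Q : ℕ → ℕ) : Prop where
  apply_zero : S 0 = 1
  kneading_lt : ∀ k, 1 ≤ k → Q k < k
  apply_eq : ∀ k, 1 ≤ k → S k = S (k - 1) + S (Q k)

namespace IsCuttingTimes

variable {S Q : ℕ → ℕ}

lemma apply_succ (hS : IsCuttingTimes S Q) (k : ℕ) : S (k + 1) = S k + S (Q (k + 1)) :=
  hS.apply_eq (k + 1) (Nat.le_add_left 1 k)

lemma pos (hS : IsCuttingTimes S Q) : ∀ k, 0 < S k
  | 0 => hS.apply_zero ▸ one_pos
  | k + 1 => hS.apply_succ k ▸ Nat.add_pos_left (hS.pos k) _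

lemma strictMono (hS : IsCuttingTimes S Q) : StrictMono S :=
  strictMono_nat_of_lt_succ fun k => hS.apply_succ k ▸ Nat.lt_add_of_pos_right (hS.pos _)

lemma lt_apply (hS : IsCuttingTimes S Q) : ∀ k, k < S k
  | 0 => hS.pos 0
  | k + 1 => (Nat.succ_le_of_lt (hS.lt_apply k)).trans_lt (hS.strictMono k.lt_succ_self)

lemma partialSum_le {v : ℕ → ℕ} (hS : IsCuttingTimes S Q) {n : ℕ}
    (h : ∀ i, n < S i → partialSum S v i = n) (i : ℕ) : partialSum S v i ≤ n :=
  (partialSum_mono (le_max_left i n)).trans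
    (h _ ((hS.lt_apply n).trans_le (hS.strictMono.monotone (le_max_right i n)))).le

lemma le_of_isFullPrefix {v : ℕ → ℕ} (hS : IsCuttingTimes S Q) {n i : ℕ}
    (hle : ∀ i, partialSum S v i ≤ n) (hi : IsFullPrefix S v i) : i ≤ n := by
  have := hle i
  have := hS.lt_apply i
  rw [IsFullPrefix] at hi
  omega

end IsCuttingTimes

namespace Admissible

variable {S Q v : ℕ → ℕ} {l : ℕ}

lemma apply_eq_zero_of_isFullPrefix (hS : IsCuttingTimes S Q) (hv : Admissible S v)
    (hl : IsFullPrefix S v l) (hl' : ¬ IsFullPrefix S v (l + 1)) : v l = 0 := by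
  rcases Nat.le_one_iff_eq_zero_or_eq_one.1 (hv.le_one l) with h0 | h1
  · exact h0
  -- a digit `1` after a full prefix forces `Q (l + 1) = l`, and then `l + 1` is full too
  have hsum := hv.partialSum_lt (l + 1)
  rw [partialSum_succ, hl, h1, one_mul, hS.apply_succ] at hsum
  have hSl := hS.pos l
  have hQ : Q (l + 1) = l := le_antisymm (Nat.lt_succ_iff.1 (hS.kneading_lt _ (by omega)))
    (hS.strictMono.le_iff_le.1 (by omega))
  exact absurd (by rw [IsFullPrefix, partialSum_succ, hl, h1, hS.apply_succ, hQ]; omega) hl'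

lemma partialSum_carryAt (hS : IsCuttingTimes S Q) (hv : Admissible S v) (hl : IsFullPrefix S v l)
    (hmax : ∀ i, l < i → ¬ IsFullPrefix S v i) {i : ℕ} (hi : l < i) :
    partialSum S (carryAt v l) i = partialSum S v i + 1 := by
  induction i, hi using Nat.le_induction with
  | base =>
    rw [partialSum_succ, partialSum_succ, partialSum_carryAt_of_le le_rfl, hl,
      hv.apply_eq_zero_of_isFullPrefix hS hl (hmax _ l.lt_succ_self)]
    simp only [carryAt, lt_irrefl, if_false, if_true]
    have := hS.pos l
    omega
  | succ i hi ih =>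
    rw [partialSum_succ, partialSum_succ, ih]
    simp only [carryAt, if_neg (show ¬ i < l by omega), if_neg (show i ≠ l by omega)]
    ring

lemma carryAt (hS : IsCuttingTimes S Q) (hv : Admissible S v) (hl : IsFullPrefix S v l)
    (hmax : ∀ i, l < i → ¬ IsFullPrefix S v i) : Admissible S (carryAt v l) := by
  refine ⟨fun j => ?_, fun i => ?_⟩
  · unfold CuttingTimes.carryAt; split_ifs <;> simp [hv.le_one j]
  · rcases le_or_gt i l with hi | hi
    · rw [partialSum_carryAt_of_le hi]
      exact hS.pos i
    · have h1 := hv.partialSum_lt i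
      have h2 := hmax i hi
      rw [IsFullPrefix] at h2
      rw [hv.partialSum_carryAt hS hl hmax hi]
      omega

end Admissible

def lastFull (S v : ℕ → ℕ) (n : ℕ) : ℕ := Nat.findGreatest (IsFullPrefix S v) n

lemma lastFull_spec {S v : ℕ → ℕ} {n : ℕ} (hS0 : S 0 = 1) (hn : ∀ i, IsFullPrefix S v i → i ≤ n) :
    IsFullPrefix S v (lastFull S v n) ∧ ∀ i, lastFull S v n < i → ¬ IsFullPrefix S v i :=
  ⟨Nat.findGreatest_spec (Nat.zero_le n) (by rw [IsFullPrefix, hS0]; rfl),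
    fun i hi h => Nat.findGreatest_is_greatest hi (hn i h) h⟩

def expansion (S : ℕ → ℕ) : ℕ → ℕ → ℕ
  | 0 => fun _ => 0
  | n + 1 => carryAt (expansion S n) (lastFull S (expansion S n) n)

section Expansion

variable {S Q : ℕ → ℕ}

lemma admissible_expansion_and (hS : IsCuttingTimes S Q) (n : ℕ) :
    Admissible S (expansion S n) ∧ ∀ i, n < S i → partialSum S (expansion S n) i = n := by
  induction n with
  | zero =>
    refine ⟨⟨fun _ => zero_le_one, fun i => ?_⟩, fun i _ => ?_⟩ <;>
      simp [partialSum, expansion, hS.pos i]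
  | succ n ih =>
    obtain ⟨hv, hsum⟩ := ih
    have hle := hS.partialSum_le hsum
    obtain ⟨hl, hmax⟩ := lastFull_spec hS.apply_zero fun _ => hS.le_of_isFullPrefix hle
    refine ⟨hv.carryAt hS hl hmax, fun i hi => ?_⟩
    have hli : lastFull S (expansion S n) n < i := by
      have := hle (lastFull S (expansion S n) n)
      rw [hl] at this
      exact hS.strictMono.lt_iff_lt.1 (by omega)
    rw [expansion, hv.partialSum_carryAt hS hl hmax hli, hsum i (by omega)]

lemma admissible_expansion (hS : IsCuttingTimes S Q) (n : ℕ) : Admissible S (expansion S n) :=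
  (admissible_expansion_and hS n).1

lemma partialSum_expansion (hS : IsCuttingTimes S Q) {n i : ℕ} (hi : n < S i) :
    partialSum S (expansion S n) i = n :=
  (admissible_expansion_and hS n).2 i hi

lemma exists_expansion_succ_eq_carryAt (hS : IsCuttingTimes S Q) (n : ℕ) :
    ∃ l, IsFullPrefix S (expansion S n) l ∧ (∀ i, l < i → ¬ IsFullPrefix S (expansion S n) i) ∧
      expansion S (n + 1) = carryAt (expansion S n) l := by
  have hle := hS.partialSum_le fun i => partialSum_expansion hS (n := n) (i := i)
  obtain ⟨hl, hmax⟩ := lastFull_spec hS.apply_zero fun _ => hS.le_of_isFullPrefix hle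
  exact ⟨_, hl, hmax, rfl⟩

lemma expansion_apply_of_le (hS : IsCuttingTimes S Q) {n i : ℕ} (hi : n ≤ i) :
    expansion S n i = 0 := by
  have hni : n < S i := hi.trans_lt (hS.lt_apply i)
  rw [(admissible_expansion hS n).apply_eq_div, partialSum_expansion hS
    (hni.trans (hS.strictMono i.lt_succ_self)), Nat.div_eq_of_lt hni]

lemma isGreedyRep_expansion (hS : IsCuttingTimes S Q) (n : ℕ) : IsGreedyRep S n (expansion S n) := by
  have h := (admissible_expansion hS n).isGreedyRep hS.strictMono fun i => expansion_apply_of_le hS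
  rwa [partialSum_expansion hS (hS.lt_apply n)] at h

lemma eq_zero_of_isGreedyRep_zero (hS : IsCuttingTimes S Q) {e : ℕ → ℕ} (he : IsGreedyRep S 0 e) :
    e = fun _ => 0 := by
  funext i
  have hne : e i ≠ 1 := fun h => by
    have := ((he.2.2.2 i).1 h).1
    simp only [mem_ofPred_eq, Nat.zero_sub, Nat.le_zero] at this
    exact (hS.pos i).ne' this
  have := he.1 i
  omega

lemma setOf_isGreedyRep_eq_range (hS : IsCuttingTimes S Q) {α : (ℕ → ℕ) → ℕ → ℕ}
    (hagree : ∀ (n : ℕ) (e e' : ℕ → ℕ), IsGreedyRep S n e → IsGreedyRep S (n + 1) e' → α e = e') :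
    {e | ∃ n, IsGreedyRep S n e} = range (expansion S) := by
  ext e
  constructor
  · rintro ⟨_ | n, hn⟩
    · exact ⟨0, (eq_zero_of_isGreedyRep_zero hS hn).symm⟩
    -- `α` maps the expansion of `n` to every greedy representation of `n + 1`
    · exact ⟨n + 1, (hagree n _ _ (isGreedyRep_expansion hS n) (isGreedyRep_expansion hS _)).symm.trans
        (hagree n _ _ (isGreedyRep_expansion hS n) hn)⟩
  · rintro ⟨n, rfl⟩
    exact ⟨n, isGreedyRep_expansion hS n⟩

lemma isFullPrefix_expansion_sub_one (hS : IsCuttingTimes S Q) (m : ℕ) :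
    IsFullPrefix S (expansion S (S m - 1)) m :=
  partialSum_expansion hS (Nat.sub_lt (hS.pos m) one_pos)

lemma expansion_apply_eq_zero_of_lt (hS : IsCuttingTimes S Q) {j m : ℕ} (hj : j < m) :
    expansion S (S m) j = 0 := by
  obtain ⟨l, -, hmax, hsucc⟩ := exists_expansion_succ_eq_carryAt hS (S m - 1)
  rw [Nat.sub_add_cancel (hS.pos m)] at hsucc
  have hml : m ≤ l := not_lt.1 fun h => hmax m h (isFullPrefix_expansion_sub_one hS m)
  simp [hsucc, carryAt, hj.trans_le hml]

lemma isFullPrefix_expansion_sub_one_kneading (hS : IsCuttingTimes S Q) {m : ℕ} (hm : 1 ≤ m) :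
    IsFullPrefix S (expansion S (S m - 1)) (Q m) := by
  obtain ⟨k, rfl⟩ : ∃ k, m = k + 1 := ⟨m - 1, by omega⟩
  have hv := admissible_expansion hS (S (k + 1) - 1)
  have hfull := isFullPrefix_expansion_sub_one hS (k + 1)
  set v := expansion S (S (k + 1) - 1)
  have hlt := hv.partialSum_lt k
  have hSQ : 0 < S (Q (k + 1)) := hS.pos _
  have hSk := hS.apply_succ k
  rw [IsFullPrefix, partialSum_succ] at hfull
  -- the top digit is `1` at `k`, leaving `S (Q (k + 1)) - 1` for the digits below `k`
  have hk : partialSum S v k = S (Q (k + 1)) - 1 := by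
    rcases Nat.le_one_iff_eq_zero_or_eq_one.1 (hv.le_one k) with h | h <;>
      rw [h] at hfull <;> omega
  have hQk : Q (k + 1) ≤ k := Nat.lt_succ_iff.1 (hS.kneading_lt _ hm)
  rw [IsFullPrefix, partialSum_eq_of_lt hS.strictMono.monotone hQk (by omega), hk]

lemma isFullPrefix_expansion_or_exists_jump (hS : IsCuttingTimes S Q) {K m : ℕ} (hKm : K ≤ m) :
    IsFullPrefix S (expansion S (S m - 1)) K ∨ ∃ a, K < a ∧ Q a < K ∧ ∃ n, Q^[n] m = a := by
  induction m using Nat.strong_induction_on with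
  | _ m ih =>
    rcases hKm.eq_or_lt with rfl | hKm
    · exact Or.inl (isFullPrefix_expansion_sub_one hS K)
    have hm : 1 ≤ m := by omega
    rcases lt_or_ge (Q m) K with hQ | hQ
    · exact Or.inr ⟨m, hKm, hQ, 0, rfl⟩
    rcases ih (Q m) (hS.kneading_lt m hm) hQ with h | ⟨a, hKa, hQa, n, hn⟩
    · left
      rw [IsFullPrefix, partialSum_congr fun j hj => (admissible_expansion hS _).eq_of_isFullPrefix
        (admissible_expansion hS _) (isFullPrefix_expansion_sub_one_kneading hS hm)
        (isFullPrefix_expansion_sub_one hS (Q m)) j (hj.trans_le hQ)]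
      exact h
    · exact Or.inr ⟨a, hKa, hQa, n + 1, by rwa [Function.iterate_succ_apply]⟩

lemma eventually_forall_iterate_ne (hQinf : Tendsto Q atTop atTop) {K : ℕ}
    (hK : ∀ a, K < a → Q a < K → {l | a < l ∧ ∃ n : ℕ, Q^[n] l = a}.Finite) :
    ∀ᶠ m in atTop, ∀ a, K < a → Q a < K → ∀ n, Q^[n] m ≠ a := by
  obtain ⟨A, hA⟩ := eventually_atTop.1 (hQinf.eventually_ge_atTop K)
  have hfin : (⋃ a ∈ {a | K < a ∧ a < A ∧ Q a < K}, {l | a < l ∧ ∃ n : ℕ, Q^[n] l = a}).Finite :=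
    ((finite_Ioo K A).subset fun a ha => ⟨ha.1, ha.2.1⟩).biUnion fun a ha => hK a ha.1 ha.2.2
  filter_upwards [Nat.cofinite_eq_atTop ▸ hfin.eventually_cofinite_notMem, eventually_ge_atTop A]
    with m hm hAm a hKa hQa n hn
  have haA : a < A := lt_of_not_ge fun h => (hA a h).not_gt hQa
  exact hm (mem_biUnion ⟨hKa, haA, hQa⟩ ⟨haA.trans_le hAm, n, hn⟩)

lemma exists_tendsto_expansion_sub_one (hS : IsCuttingTimes S Q) (hQinf : Tendsto Q atTop atTop)
    (hK : ∀ c, ∃ K, c < K ∧ ∀ a, K < a → Q a < K → {l | a < l ∧ ∃ n : ℕ, Q^[n] l = a}.Finite) :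
    ∃ x, Tendsto (fun m => expansion S (S m - 1)) atTop (𝓝 x) := by
  choose K hcK hK using hK
  refine ⟨fun c => expansion S (S (K c) - 1) c, tendsto_pi_nhds.2 fun c =>
    tendsto_const_nhds.congr' ?_⟩
  filter_upwards [eventually_forall_iterate_ne hQinf (hK c), eventually_ge_atTop (K c)] with m hm hKm
  have hfull := (isFullPrefix_expansion_or_exists_jump hS hKm).resolve_right
    fun ⟨a, hKa, hQa, n, hn⟩ => hm a hKa hQa n hn
  exact (admissible_expansion hS _).eq_of_isFullPrefix (admissible_expansion hS _)
    (isFullPrefix_expansion_sub_one hS (K c)) hfull c (hcK c)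

end Expansion

lemma isClosed_setOf_admissible (S : ℕ → ℕ) : IsClosed {e : ℕ → ℕ | Admissible S e} := by
  have hcont : ∀ i, Continuous fun e : ℕ → ℕ => partialSum S e i := fun i =>
    continuous_finsetSum _ fun j _ => (continuous_apply j).mul continuous_const
  have h : {e : ℕ → ℕ | Admissible S e} =
      (⋂ j, (fun e : ℕ → ℕ => e j) ⁻¹' Iic 1) ∩ ⋂ i, (fun e => partialSum S e i) ⁻¹' Iio (S i) := by
    ext e
    simp only [mem_ofPred_eq, mem_inter_iff, mem_iInter, mem_preimage, mem_Iic, mem_Iio]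
    exact ⟨fun h => ⟨h.le_one, h.partialSum_lt⟩, fun h => ⟨h.1, h.2⟩⟩
  rw [h]
  exact (isClosed_iInter fun j => (isClosed_discrete _).preimage (continuous_apply j)).inter
    (isClosed_iInter fun i => (isClosed_discrete _).preimage (hcont i))

lemma eventually_forall_lt_apply_eq (x : ℕ → ℕ) (N : ℕ) : ∀ᶠ e in 𝓝 x, ∀ j < N, e j = x j :=
  (eventually_all_finite (finite_Iio N)).2 fun j _ =>
    (continuous_apply j).continuousAt ((isOpen_discrete {x j}).mem_nhds rfl)

lemma exists_homeomorph_of_bijOn {X Y : Type*} [TopologicalSpace X] [TopologicalSpace Y] [T2Space Y]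
    {s : Set X} {t : Set Y} {f : X → Y} (hs : IsCompact s) (hf : ContinuousOn f s)
    (hbij : BijOn f s t) : ∃ h : s ≃ₜ t, ∀ x, (h x : Y) = f x := by
  have := isCompact_iff_compactSpace.mp hs
  exact ⟨(hf.mapsToRestrict hbij.mapsTo).homeoOfEquivCompactToT2 (f := hbij.equiv f), fun _ => rfl⟩

structure IsAddAndCarry (S : ℕ → ℕ) (E : Set (ℕ → ℕ)) (α : (ℕ → ℕ) → ℕ → ℕ) : Prop where
  eq_closure : E = closure (range (expansion S))
  continuousOn : ContinuousOn α E
  apply_expansion : ∀ n, α (expansion S n) = expansion S (n + 1)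

namespace IsAddAndCarry

variable {S Q : ℕ → ℕ} {E : Set (ℕ → ℕ)} {α : (ℕ → ℕ) → ℕ → ℕ} {x x₀ : ℕ → ℕ}

lemma expansion_mem (hα : IsAddAndCarry S E α) (n : ℕ) : expansion S n ∈ E :=
  hα.eq_closure ▸ subset_closure (mem_range_self n)

lemma admissible_of_mem (hα : IsAddAndCarry S E α) (hS : IsCuttingTimes S Q) (hx : x ∈ E) :
    Admissible S x :=
  closure_minimal (range_subset_iff.2 (admissible_expansion hS)) (isClosed_setOf_admissible S)
    (hα.eq_closure ▸ hx)

lemma isCompact (hα : IsAddAndCarry S E α) (hS : IsCuttingTimes S Q) : IsCompact E :=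
  (isCompact_univ_pi fun _ => (finite_Iic 1).isCompact).of_isClosed_subset
    (hα.eq_closure ▸ isClosed_closure) fun _ hx =>
      mem_univ_pi.2 fun j => (hα.admissible_of_mem hS hx).le_one j

lemma exists_expansion_approx (hα : IsAddAndCarry S E α) (hx : x ∈ E) (N : ℕ) :
    ∃ n, (∀ j < N, expansion S n j = x j) ∧ ∀ j < N, expansion S (n + 1) j = α x j := by
  have hev : ∀ᶠ e in 𝓝 x, e ∈ E → (∀ j < N, e j = x j) ∧ ∀ j < N, α e j = α x j := by
    filter_upwards [eventually_forall_lt_apply_eq x N, mem_nhdsWithin_iff_eventually.1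
      ((hα.continuousOn x hx).eventually (eventually_forall_lt_apply_eq (α x) N))]
      with e h1 h2 he using ⟨h1, h2 he⟩
  obtain ⟨_, ⟨n, rfl⟩, hn⟩ :=
    ((mem_closure_iff_frequently.1 (hα.eq_closure ▸ hx)).and_eventually hev).exists
  obtain ⟨h1, h2⟩ := hn (hα.expansion_mem n)
  exact ⟨n, h1, hα.apply_expansion n ▸ h2⟩

lemma apply_eq_zero_of_isFullPrefix (hα : IsAddAndCarry S E α) (hS : IsCuttingTimes S Q)
    (hx : x ∈ E) {i j : ℕ} (hi : IsFullPrefix S x i) (hj : j < i) : α x j = 0 := by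
  obtain ⟨n, hxn, hαn⟩ := hα.exists_expansion_approx hx i
  obtain ⟨l, -, hmax, hsucc⟩ := exists_expansion_succ_eq_carryAt hS n
  have hil : i ≤ l := not_lt.1 fun hl => hmax i hl (by rwa [IsFullPrefix, partialSum_congr hxn])
  rw [← hαn j hj, hsucc]
  simp [carryAt, hj.trans_le hil]

lemma exists_eq_carryAt (hα : IsAddAndCarry S E α) (hS : IsCuttingTimes S Q) (hx : x ∈ E)
    (h0 : α x ≠ fun _ => 0) :
    ∃ L, IsFullPrefix S x L ∧ (∀ i, L < i → ¬ IsFullPrefix S x i) ∧ α x = carryAt x L := by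
  obtain ⟨c, hc⟩ : ∃ c, α x c ≠ 0 := by
    by_contra! h
    exact h0 (funext h)
  obtain ⟨hL, hmax⟩ := lastFull_spec hS.apply_zero fun i hi =>
    not_lt.1 fun hci => hc (hα.apply_eq_zero_of_isFullPrefix hS hx hi hci)
  refine ⟨_, hL, hmax, funext fun j => ?_⟩
  set L := lastFull S x c
  have hLc : L ≤ c := Nat.findGreatest_le c
  obtain ⟨n, hxn, hαn⟩ := hα.exists_expansion_approx hx (max j c + 1)
  obtain ⟨l, hl, hlmax, hsucc⟩ := exists_expansion_succ_eq_carryAt hS n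
  have hfull : ∀ i ≤ max j c + 1, IsFullPrefix S (expansion S n) i ↔ IsFullPrefix S x i :=
    fun i hi => by rw [IsFullPrefix, IsFullPrefix, partialSum_congr fun k hk => hxn k (by omega)]
  -- the carry of an approximation stops at or below `c`, since `α x c ≠ 0`
  have hlc : l ≤ c := not_lt.1 fun hcl => hc (by
    rw [← hαn c (by omega), hsucc]; simp [carryAt, hcl])
  have hlL : l = L := le_antisymm (not_lt.1 fun h => hmax l h ((hfull l (by omega)).1 hl))
    (not_lt.1 fun h => hlmax L h ((hfull L (by omega)).2 hL))
  rw [← hαn j (by omega), hsucc, hlL]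
  simp only [carryAt, hxn j (by omega)]

lemma mem_of_tendsto (hα : IsAddAndCarry S E α)
    (hx₀ : Tendsto (fun m => expansion S (S m - 1)) atTop (𝓝 x₀)) : x₀ ∈ E :=
  hα.eq_closure ▸ mem_closure_of_tendsto hx₀ (Eventually.of_forall fun _ => mem_range_self _)

lemma apply_eq_zero (hα : IsAddAndCarry S E α) (hS : IsCuttingTimes S Q)
    (hx₀ : Tendsto (fun m => expansion S (S m - 1)) atTop (𝓝 x₀)) : α x₀ = fun _ => 0 := by
  have hlim : Tendsto (fun m => α (expansion S (S m - 1))) atTop (𝓝 (α x₀)) :=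
    (hα.continuousOn x₀ (hα.mem_of_tendsto hx₀)).tendsto.comp
      (tendsto_nhdsWithin_iff.2 ⟨hx₀, Eventually.of_forall fun _ => hα.expansion_mem _⟩)
  refine tendsto_nhds_unique hlim (tendsto_pi_nhds.2 fun j => tendsto_const_nhds.congr' ?_)
  filter_upwards [eventually_gt_atTop j] with m hm
  rw [hα.apply_expansion, Nat.sub_add_cancel (hS.pos m), expansion_apply_eq_zero_of_lt hS hm]

lemma eq_of_apply_eq_zero (hα : IsAddAndCarry S E α) (hS : IsCuttingTimes S Q)
    (hx₀ : Tendsto (fun m => expansion S (S m - 1)) atTop (𝓝 x₀)) (hx : x ∈ E)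
    (h : α x = fun _ => 0) : x = x₀ := by
  funext c
  obtain ⟨M, hM⟩ := eventually_atTop.1
    (tendsto_pure.1 (nhds_discrete ℕ ▸ tendsto_pi_nhds.1 hx₀ c))
  obtain ⟨n, hxn, hαn⟩ := hα.exists_expansion_approx hx (max M (c + 1))
  obtain ⟨l, hl, -, hsucc⟩ := exists_expansion_succ_eq_carryAt hS n
  -- the carry sets digit `l` of `α x = 0`, so it happens beyond the approximation window
  have hMl : max M (c + 1) ≤ l := not_lt.1 fun hlt => by
    have := hαn l hlt
    simp [hsucc, h, carryAt] at this
  calc x c = expansion S n c := (hxn c (by omega)).symm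
    _ = expansion S (S l - 1) c := (admissible_expansion hS n).eq_of_isFullPrefix
        (admissible_expansion hS _) hl (isFullPrefix_expansion_sub_one hS l) c (by omega)
    _ = x₀ c := hM l (by omega)

lemma injOn (hα : IsAddAndCarry S E α) (hS : IsCuttingTimes S Q)
    (hx₀ : Tendsto (fun m => expansion S (S m - 1)) atTop (𝓝 x₀)) : InjOn α E := by
  intro x hx y hy hxy
  by_cases h0 : α x = fun _ => 0
  · rw [hα.eq_of_apply_eq_zero hS hx₀ hx h0, hα.eq_of_apply_eq_zero hS hx₀ hy (hxy ▸ h0)]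
  obtain ⟨L, hL, hLmax, hxL⟩ := hα.exists_eq_carryAt hS hx h0
  obtain ⟨L', hL', hL'max, hyL'⟩ := hα.exists_eq_carryAt hS hy (hxy ▸ h0)
  have hxa := hα.admissible_of_mem hS hx
  have hya := hα.admissible_of_mem hS hy
  exact hxa.eq_of_carryAt_eq hya hL hL'
    (hxa.apply_eq_zero_of_isFullPrefix hS hL (hLmax _ L.lt_succ_self))
    (hya.apply_eq_zero_of_isFullPrefix hS hL' (hL'max _ L'.lt_succ_self))
    (hxL.symm.trans (hxy.trans hyL'))

lemma mapsTo (hα : IsAddAndCarry S E α) : MapsTo α E E := by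
  obtain ⟨rfl, hcont, hsucc⟩ := hα
  refine fun x hx => closure_minimal ?_ isClosed_closure (hcont.image_closure (mem_image_of_mem α hx))
  rintro _ ⟨_, ⟨n, rfl⟩, rfl⟩
  exact hsucc n ▸ subset_closure (mem_range_self _)

lemma surjOn (hα : IsAddAndCarry S E α) (hS : IsCuttingTimes S Q)
    (hx₀ : Tendsto (fun m => expansion S (S m - 1)) atTop (𝓝 x₀)) : SurjOn α E E := by
  have hsub : range (expansion S) ⊆ α '' E := by
    rintro _ ⟨_ | n, rfl⟩
    · exact ⟨x₀, hα.mem_of_tendsto hx₀, hα.apply_eq_zero hS hx₀⟩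
    · exact ⟨_, hα.expansion_mem n, hα.apply_expansion n⟩
  exact fun x hx => closure_minimal hsub
    ((hα.isCompact hS).image_of_continuousOn hα.continuousOn).isClosed (hα.eq_closure ▸ hx)

end IsAddAndCarry

end CuttingTimes

open CuttingTimes

theorem alpha_homeomorphism_general (S Q : ℕ → ℕ) (hS0 : S 0 = 1)
    (hQlt : ∀ k, 1 ≤ k → Q k < k) (hrec : ∀ k, 1 ≤ k → S k = S (k - 1) + S (Q k))
    (hQinf : Filter.Tendsto Q Filter.atTop Filter.atTop)
    (ks : ℕ → ℕ) (hks : StrictMono ks)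
    (hcond : ∀ i k, ks i < k →
      (ks i ≤ Q k ∨ (Q k < ks i ∧ {l | k < l ∧ ∃ n : ℕ, Q^[n] l = k}.Finite)))
    (α : (ℕ → ℕ) → (ℕ → ℕ))
    (hcont : ContinuousOn α (Eset Q))
    (hagree : ∀ (n : ℕ) (e e' : ℕ → ℕ),
      IsGreedyRep S n e → IsGreedyRep S (n + 1) e' → α e = e')
    (hclos : Eset Q = closure {e | ∃ n : ℕ, IsGreedyRep S n e}) :
    (∃ h : ↥(Eset Q) ≃ₜ ↥(Eset Q), ∀ e : ↥(Eset Q), (h e : ℕ → ℕ) = α (e : ℕ → ℕ)) ∧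
    (∃! e : ℕ → ℕ, e ∈ Eset Q ∧ α e = fun _ => 0) := by
  have hS : IsCuttingTimes S Q := ⟨hS0, hQlt, hrec⟩
  have hα : IsAddAndCarry S (Eset Q) α :=
    ⟨hclos.trans (by rw [setOf_isGreedyRep_eq_range hS hagree]), hcont, fun n =>
      hagree n _ _ (isGreedyRep_expansion hS n) (isGreedyRep_expansion hS (n + 1))⟩
  obtain ⟨x₀, hx₀⟩ := exists_tendsto_expansion_sub_one hS hQinf fun c =>
    ⟨ks (c + 1), c.lt_succ_self.trans_le hks.le_apply,
      fun a ha hQa => ((hcond _ a ha).resolve_left (not_le.2 hQa)).2⟩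
  have hbij : Set.BijOn α (Eset Q) (Eset Q) := ⟨hα.mapsTo, hα.injOn hS hx₀, hα.surjOn hS hx₀⟩
  exact ⟨exists_homeomorph_of_bijOn (hα.isCompact hS) hcont hbij,
    x₀, ⟨hα.mem_of_tendsto hx₀, hα.apply_eq_zero hS hx₀⟩,
    fun y hy => hα.eq_of_apply_eq_zero hS hx₀ hy.1 hy.2⟩

/-- If `Q(k) → ∞` and there is an infinite (strictly increasing) sequence `(k_i)` such that
for all `i` and all `k > k_i` either `Q(k) ≥ k_i`, or `Q(k) < k_i` and only finitely many
`l > k` satisfy `Q^n(l) = k` for some `n`, then the add-and-carry map `α` is a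
homeomorphism of `E`; in particular the zero sequence has exactly one `α`-preimage in `E`. -/
theorem alpha_homeomorphism (S Q : ℕ → ℕ) (hS0 : S 0 = 1) (hmono : StrictMono S)
    (hQlt : ∀ k, 1 ≤ k → Q k < k) (hrec : ∀ k, 1 ≤ k → S k = S (k - 1) + S (Q k))
    (hQinf : Filter.Tendsto Q Filter.atTop Filter.atTop)
    (ks : ℕ → ℕ) (hks : StrictMono ks)
    (hcond : ∀ i k, ks i < k →
      (ks i ≤ Q k ∨ (Q k < ks i ∧ {l | k < l ∧ ∃ n : ℕ, Q^[n] l = k}.Finite)))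
    (α : (ℕ → ℕ) → (ℕ → ℕ))
    (hmaps : Set.MapsTo α (Eset Q) (Eset Q))
    (hcont : ContinuousOn α (Eset Q))
    (hagree : ∀ (n : ℕ) (e e' : ℕ → ℕ),
      IsGreedyRep S n e → IsGreedyRep S (n + 1) e' → α e = e')
    (hclos : Eset Q = closure {e | ∃ n : ℕ, IsGreedyRep S n e}) :
    (∃ h : ↥(Eset Q) ≃ₜ ↥(Eset Q), ∀ e : ↥(Eset Q), (h e : ℕ → ℕ) = α (e : ℕ → ℕ)) ∧
    (∃! e : ℕ → ℕ, e ∈ Eset Q ∧ α e = fun _ => 0) :=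
  alpha_homeomorphism_general S Q hS0 hQlt hrec hQinf ks hks hcond α hcont hagree hclos
end

section
/- With the kneading map Q of the recursive construction (Q(k_i) = k_i − 1 for i ≥ 3, Q(k_i + j) = Q(k_{i−1} + j − 1), k_i = 2k_{i−1} − k_{i−2} + 1), one has S_{k_{i+1}−1} − S_{k_i} = S_{k_i−1} − S_{k_{i−1}−1} for all sufficiently large i. -/
/-!
The recursion for `k` says that its gaps grow by one at each step, so `k (i + 1) = k i + i`.
The kneading map repeats on the block `k i + 1, …, k (i + 1) - 1` the values it takes on
`k (i - 1), …, k i - 1`, and since each cutting time is the previous one plus `S ∘ Q`, the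
increments of `S` over these two blocks of `i - 1` consecutive indices coincide.
-/

theorem add_eq_add_of_kneading_eq {S Q : ℕ → ℕ}
    (hrec : ∀ l, 1 ≤ l → S l = S (l - 1) + S (Q l)) {a b n : ℕ}
    (hQ : ∀ j, 1 ≤ j → j ≤ n → Q (b + j) = Q (a + j)) :
    S (b + n) + S a = S b + S (a + n) := by
  induction n with
  | zero => rfl
  | succ n ih =>
    have ih := ih fun j hj hjn => hQ j hj (by omega)
    have hb : S (b + (n + 1)) = S (b + n) + S (Q (a + (n + 1))) := by
      rw [← hQ (n + 1) (by omega) le_rfl]; exact hrec _ (by omega)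
    have ha : S (a + (n + 1)) = S (a + n) + S (Q (a + (n + 1))) := hrec _ (by omega)
    omega

section GapSequence

variable {k : ℕ → ℕ} (hk2 : k 2 = k 1 + 1)
  (hki : ∀ i, 3 ≤ i → k i + k (i - 2) = 2 * k (i - 1) + 1)
include hk2 hki

theorem succ_eq_add_of_gap_recursion : ∀ i, 1 ≤ i → k (i + 1) = k i + i := by
  intro i hi
  induction i, hi using Nat.le_induction with
  | base => exact hk2
  | succ i hi ih =>
    have h : k (i + 1 + 1) + k i = 2 * k (i + 1) + 1 := hki (i + 2) (by omega)
    omega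

theorem one_le_of_gap_recursion (hk1 : 1 ≤ k 1) : ∀ i, 1 ≤ i → 1 ≤ k i := by
  intro i hi
  induction i, hi using Nat.le_induction with
  | base => exact hk1
  | succ i hi ih => rw [succ_eq_add_of_gap_recursion hk2 hki i hi]; omega

end GapSequence

theorem recursive_construction_cutting_time_identity_general (S Q k : ℕ → ℕ)
    (hrec : ∀ l, 1 ≤ l → S l = S (l - 1) + S (Q l))
    (hk1 : 1 ≤ k 1) (hk2 : k 2 = k 1 + 1)
    (hki : ∀ i, 3 ≤ i → k i + k (i - 2) = 2 * k (i - 1) + 1)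
    (hQkj : ∀ i, 2 ≤ i → ∀ j, 1 ≤ j → k i + j < k (i + 1) →
      Q (k i + j) = Q (k (i - 1) + j - 1)) :
    ∃ N, ∀ i, N ≤ i →
      S (k (i + 1) - 1) + S (k (i - 1) - 1) = S (k i) + S (k i - 1) := by
  refine ⟨2, fun i hi => ?_⟩
  obtain ⟨m, rfl⟩ : ∃ m, i = m + 2 := ⟨i - 2, by omega⟩
  have hnext : k (m + 2 + 1) = k (m + 2) + (m + 2) :=
    succ_eq_add_of_gap_recursion hk2 hki (m + 2) (by omega)
  have hcur : k (m + 2) = k (m + 1) + (m + 1) :=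
    succ_eq_add_of_gap_recursion hk2 hki (m + 1) (by omega)
  have hprev := one_le_of_gap_recursion hk2 hki hk1 (m + 1) (by omega)
  have hQ : ∀ j, 1 ≤ j → j ≤ m + 1 → Q (k (m + 2) + j) = Q (k (m + 1) - 1 + j) := by
    intro j hj hjm
    rw [hQkj (m + 2) (by omega) j hj (by omega)]
    show Q (k (m + 1) + j - 1) = _
    exact congrArg Q (by omega)
  have key := add_eq_add_of_kneading_eq hrec hQ
  rw [show k (m + 2) + (m + 1) = k (m + 2 + 1) - 1 by omega,
    show k (m + 1) - 1 + (m + 1) = k (m + 2) - 1 by omega] at key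
  exact key

/-- For the cutting times `S` of the recursively constructed kneading map
(`k_2 = k_1 + 1`, `k_i = 2 k_{i-1} − k_{i-2} + 1`, `Q(k_i) = k_i − 1` for `i ≥ 3`,
`Q(k_i + j) = Q(k_{i-1} + j − 1)`), one has
`S_{k_{i+1}−1} − S_{k_i} = S_{k_i−1} − S_{k_{i−1}−1}` for all sufficiently large `i`. -/
theorem recursive_construction_cutting_time_identity (S Q k : ℕ → ℕ)
    (hS0 : S 0 = 1) (hmono : StrictMono S)
    (hQlt : ∀ l, 1 ≤ l → Q l < l)
    (hrec : ∀ l, 1 ≤ l → S l = S (l - 1) + S (Q l))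
    (hk1 : 1 ≤ k 1) (hk2 : k 2 = k 1 + 1)
    (hki : ∀ i, 3 ≤ i → k i + k (i - 2) = 2 * k (i - 1) + 1)
    (hQki : ∀ i, 3 ≤ i → Q (k i) = k i - 1)
    (hQkj : ∀ i, 2 ≤ i → ∀ j, 1 ≤ j → k i + j < k (i + 1) →
      Q (k i + j) = Q (k (i - 1) + j - 1)) :
    ∃ N, ∀ i, N ≤ i →
      S (k (i + 1) - 1) + S (k (i - 1) - 1) = S (k i) + S (k i - 1) :=
  recursive_construction_cutting_time_identity_general S Q k hrec hk1 hk2 hki hQkj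
end
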